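/- arXiv:1701.04227 — 6 statements merged into one kernel-verified Lean document; each statement's English description precedes it below -/
import Mathlib

section
/- The complete binary tree of height 2 (the tree T_{2,2} with a root, 2 children, and 4 grandchildren) has Thue chromatic index exactly 4: it admits a nonrepetitive edge-coloring with 4 colors but not with 3. -/
/-- A repetition: a nonempty sequence whose first half equals its second half. -/
def IsRepetition {α : Type*} (l : List α) : Prop := ∃ w : List α, w ≠ [] ∧ l = w ++ w

/-- An edge-coloring is nonrepetitive if no path carries a repetitive color sequence. -/
def NonrepEdgeColoring {V α : Type*} (G : SimpleGraph V) (c : Sym2 V → α) : Prop :=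
  ∀ u v : V, ∀ p : G.Walk u v, p.IsPath → ¬ IsRepetition (p.edges.map c)

/-- The Thue chromatic index: minimum number of colors in a nonrepetitive edge-coloring. -/
noncomputable def thueIdx {V : Type*} (G : SimpleGraph V) : ℕ :=
  sInf {n | ∃ c : Sym2 V → ℕ, (∀ e ∈ G.edgeSet, c e < n) ∧ NonrepEdgeColoring G c}

/-- The complete binary tree of height 2: a root `0`, its children `1, 2`, and
grandchildren `3, 4, 5, 6`. -/
def T22 : SimpleGraph (Fin 7) :=
  SimpleGraph.fromEdgeSet {s(0, 1), s(0, 2), s(1, 3), s(1, 4), s(2, 5), s(2, 6)}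

/-
Upper bound: colour the root edges `0, 1` and, below each child, the two leaf edges `2, 3`. This
colouring is proper, and a path of length 4 must run leaf–child–root–child–leaf and is coloured
`x 0 1 y` with `x, y ∈ {2, 3}`, so no path is a repetition; this finite check is done by `decide`.

Lower bound: with 3 colours the three edges at the child `1` use all colours, so one of its leaf
edges has the colour `b` of the root edge `s(0, 2)`; symmetrically a leaf edge at `2` has the
colour `a` of `s(0, 1)`. The path through these two leaf edges and the root is coloured `b a b a`.
-/

instance : DecidableRel T22.Adj := fun u v =>
  decidable_of_iff (s(u, v) ∈ ({s(0, 1), s(0, 2), s(1, 3), s(1, 4), s(2, 5), s(2, 6)} :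
      Finset (Sym2 (Fin 7))) ∧ u ≠ v) (by simp [T22])

theorem isRepetition_iff_take_eq_drop {α : Type*} {l : List α} :
    IsRepetition l ↔ l ≠ [] ∧ l.take (l.length / 2) = l.drop (l.length / 2) := by
  constructor
  · rintro ⟨w, hw, rfl⟩
    have hlen : (w ++ w).length / 2 = w.length := by simp; omega
    rw [hlen, List.take_left, List.drop_left]
    simp [hw]
  · rintro ⟨hl, h⟩
    have hsplit := List.take_append_drop (l.length / 2) l
    refine ⟨l.take (l.length / 2), fun h0 => hl ?_, ?_⟩
    · rw [← hsplit, ← h, h0, List.append_nil]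
    · conv_lhs => rw [← hsplit, ← h]

instance {α : Type*} [DecidableEq α] : DecidablePred (IsRepetition : List α → Prop) :=
  fun _ => decidable_of_iff _ isRepetition_iff_take_eq_drop.symm

namespace NonrepEdgeColoring

variable {V α : Type*} {G : SimpleGraph V} {c : Sym2 V → α}

theorem ne_of_adj_of_adj (h : NonrepEdgeColoring G c) {a b d : V} (hba : G.Adj b a)
    (hbd : G.Adj b d) (had : a ≠ d) : c s(b, a) ≠ c s(b, d) := by
  intro he
  refine h a d (.cons hba.symm (.cons hbd .nil)) ?_ ⟨[c s(a, b)], by simp, ?_⟩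
  · simp [SimpleGraph.Walk.isPath_def, hba.ne.symm, hbd.ne, had]
  · simp [← he, Sym2.eq_swap]

theorem not_square (h : NonrepEdgeColoring G c) {a b d e f : V}
    (hab : G.Adj a b) (hbd : G.Adj b d) (hde : G.Adj d e) (hef : G.Adj e f)
    (hnd : [a, b, d, e, f].Nodup) (h₁ : c s(a, b) = c s(d, e)) (h₂ : c s(b, d) = c s(e, f)) :
    False := by
  refine h a f (.cons hab (.cons hbd (.cons hde (.cons hef .nil)))) ?_
    ⟨[c s(a, b), c s(b, d)], by simp, by simp [h₁, h₂]⟩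
  rw [SimpleGraph.Walk.isPath_def]
  simpa using hnd

end NonrepEdgeColoring

/-- An edge of `T22` is coloured by its endpoint farther from the root, which is the larger one. -/
def t22Coloring : Sym2 (Fin 7) → ℕ :=
  Sym2.lift ⟨fun u v => ![0, 0, 1, 2, 3, 2, 3] (max u v), fun u v => by simp only [max_comm]⟩

theorem t22Coloring_lt_four (e : Sym2 (Fin 7)) : t22Coloring e < 4 := by
  induction e using Sym2.ind with
  | _ u v => revert u v; decide

theorem nonrepEdgeColoring_t22Coloring : NonrepEdgeColoring T22 t22Coloring := by
  have hcheck : ∀ (u v : Fin 7) (p : {q : T22.Walk u v // q.length < 7}),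
      p.1.support.Nodup → ¬ IsRepetition (p.1.edges.map t22Coloring) := by
    decide +kernel
  intro u v p hp
  exact hcheck u v ⟨p, hp.length_lt⟩ hp.support_nodup

theorem four_le_of_nonrepEdgeColoring_T22 {c : Sym2 (Fin 7) → ℕ} {n : ℕ}
    (hc : ∀ e ∈ T22.edgeSet, c e < n) (h : NonrepEdgeColoring T22 c) : 4 ≤ n := by
  by_contra! hn
  have hlt : ∀ {u v}, T22.Adj u v → c s(u, v) < 3 := fun huv => by
    have := hc _ (T22.mem_edgeSet.mpr huv); omega
  have sw : ∀ u v : Fin 7, c s(u, v) = c s(v, u) := fun u v => congrArg c Sym2.eq_swap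
  have h01 : T22.Adj 0 1 := by decide
  have h02 : T22.Adj 0 2 := by decide
  have h13 : T22.Adj 1 3 := by decide
  have h14 : T22.Adj 1 4 := by decide
  have h25 : T22.Adj 2 5 := by decide
  have h26 : T22.Adj 2 6 := by decide
  have hroot := h.ne_of_adj_of_adj h01 h02 (by decide)
  have hleft₃ := h.ne_of_adj_of_adj h01.symm h13 (by decide)
  have hleft₄ := h.ne_of_adj_of_adj h01.symm h14 (by decide)
  have hleft := h.ne_of_adj_of_adj h13 h14 (by decide)
  have hright₅ := h.ne_of_adj_of_adj h02.symm h25 (by decide)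
  have hright₆ := h.ne_of_adj_of_adj h02.symm h26 (by decide)
  have hright := h.ne_of_adj_of_adj h25 h26 (by decide)
  have := sw 0 1; have := sw 0 2
  have := hlt h01; have := hlt h02; have := hlt h13
  have := hlt h14; have := hlt h25; have := hlt h26
  have hx : c s(1, 3) = c s(0, 2) ∨ c s(1, 4) = c s(0, 2) := by omega
  have hy : c s(2, 5) = c s(0, 1) ∨ c s(2, 6) = c s(0, 1) := by omega
  have square : ∀ x y, T22.Adj 1 x → T22.Adj 2 y → [x, 1, 0, 2, y].Nodup →
      c s(1, x) = c s(0, 2) → c s(2, y) = c s(0, 1) → False := fun x y h1x h2y hnd e₁ e₂ =>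
    h.not_square h1x.symm h01.symm h02 h2y hnd (by rw [sw, e₁]) (by rw [sw, e₂])
  rcases hx with e₁ | e₁ <;> rcases hy with e₂ | e₂ <;>
    exact square _ _ (by decide) (by decide) (by decide) e₁ e₂

/-- The complete binary tree of height 2 has Thue chromatic index exactly 4. -/
theorem stmt4 : thueIdx T22 = 4 := by
  refine IsLeast.csInf_eq ⟨⟨t22Coloring, fun e _ => t22Coloring_lt_four e,
    nonrepEdgeColoring_t22Coloring⟩, ?_⟩
  rintro n ⟨c, hc, h⟩
  exact four_le_of_nonrepEdgeColoring_T22 hc h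
end

section
/- A sequence S has a k-bad index sequence of length at most four with turning index m ≤ 3 if and only if there exist indices i < j with j < i + 2k and s_i = s_j. -/
/-- `i 1, …, i (2r)` (1-indexed) is a `k`-bad index sequence for the 1-indexed sequence `S`,
with turning index `m`: the symbols form a repetition, the indices strictly decrease up to
position `m` and then strictly increase, consecutive indices differ by at most `k`, and the
gap at the turn is strictly less than `k` when the turn is internal. -/
def KBadIdx {α : Type*} (k : ℕ) (S : ℕ → α) (r m : ℕ) (i : ℕ → ℕ) : Prop :=
  1 ≤ r ∧ 1 < m ∧ m ≤ 2 * r ∧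
  (∀ j, 1 ≤ j → j ≤ r → S (i j) = S (i (j + r))) ∧
  (∀ j, 1 ≤ j → j < m → i (j + 1) < i j) ∧
  (∀ j, m ≤ j → j < 2 * r → i j < i (j + 1)) ∧
  (∀ j, 1 ≤ j → j < 2 * r → i (j + 1) ≤ i j + k ∧ i j ≤ i (j + 1) + k) ∧
  (m < 2 * r → i (m + 1) < i m + k)

/-- A finite sequence `S` (1-indexed, of length `n`) is `k`-special if it admits no
`k`-bad index sequence with all indices in `{1, …, n}`. -/
def KSpecialFin {α : Type*} (k : ℕ) (S : ℕ → α) (n : ℕ) : Prop :=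
  ¬ ∃ r m i, KBadIdx k S r m i ∧ ∀ j, 1 ≤ j → j ≤ 2 * r → 1 ≤ i j ∧ i j ≤ n

/-- An infinite sequence `S` (1-indexed) is `k`-special if it admits no `k`-bad index
sequence. -/
def KSpecialInf {α : Type*} (k : ℕ) (S : ℕ → α) : Prop :=
  ¬ ∃ r m i, KBadIdx k S r m i ∧ ∀ j, 1 ≤ j → j ≤ 2 * r → 1 ≤ i j

/-- The sequence `S_{n,c} = 1, 2, …, n, 1, 2, …, c` (1-indexed; entry at position `i` is `i`
for `i ≤ n` and `i - n` for `i > n`). -/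
def Snc (n : ℕ) (c : ℕ) : ℕ → ℕ := fun i => if i ≤ n then i else i - n

/-!
A bad sequence of length two is a pair of equal symbols at distance at most `k`. In one of
length four, `i 2` and `i 4` are two steps apart, one of them the turn step of length less
than `k`, so they are closer than `2k`; if they coincide (the turn is then at `i 3`),
`i 3 < i 1 ≤ i 4 + k` makes `(i 3, i 1)` the close repeat instead.
Conversely, a repeat `S p = S q` with `p < q < p + 2k` is the bad sequence `q, p` when
`q ≤ p + k`, and otherwise `q - k, p, q - k, q`.
-/

def HasCloseRepeat {α : Type*} (k : ℕ) (S : ℕ → α) : Prop :=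
  ∃ p q : ℕ, 1 ≤ p ∧ p < q ∧ q < p + 2 * k ∧ S p = S q

section

variable {α : Type*} {k : ℕ} {S : ℕ → α}

theorem hasCloseRepeat_of_ne {a b : ℕ} (ha : 1 ≤ a) (hb : 1 ≤ b) (hab : a ≠ b)
    (hb_lt : b < a + 2 * k) (ha_lt : a < b + 2 * k) (hS : S a = S b) : HasCloseRepeat k S := by
  rcases hab.lt_or_gt with h | h
  · exact ⟨a, b, ha, h, hb_lt, hS⟩
  · exact ⟨b, a, hb, h, ha_lt, hS.symm⟩

theorem KBadIdx.hasCloseRepeat {r m : ℕ} {i : ℕ → ℕ} (h : KBadIdx k S r m i) (hr : r ≤ 2)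
    (hm : m ≤ 3) (hpos : ∀ j, 1 ≤ j → j ≤ 2 * r → 1 ≤ i j) : HasCloseRepeat k S := by
  obtain ⟨hr1, hm1, hmr, hrep, hdec, hinc, hgap, hturn⟩ := h
  have h21 : i 2 < i 1 := hdec 1 le_rfl hm1
  have hgap1 : i 1 ≤ i 2 + k := (hgap 1 le_rfl (by omega)).2
  have hpos1 : 1 ≤ i 1 := hpos 1 le_rfl (by omega)
  have hpos2 : 1 ≤ i 2 := hpos 2 (by norm_num) (by omega)
  interval_cases r
  · exact hasCloseRepeat_of_ne hpos1 hpos2 (by omega) (by omega) (by omega) (hrep 1 le_rfl le_rfl)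
  have hgap2 : i 3 ≤ i 2 + k ∧ i 2 ≤ i 3 + k := hgap 2 (by norm_num) (by norm_num)
  have hgap3 : i 4 ≤ i 3 + k := (hgap 3 (by norm_num) (by norm_num)).1
  have h34 : i 3 < i 4 := hinc 3 (by omega) (by norm_num)
  have hrep13 : S (i 1) = S (i 3) := hrep 1 le_rfl (by norm_num)
  have hrep24 : S (i 2) = S (i 4) := hrep 2 (by norm_num) le_rfl
  have hpos3 : 1 ≤ i 3 := hpos 3 (by norm_num) (by norm_num)
  have hpos4 : 1 ≤ i 4 := hpos 4 (by norm_num) le_rfl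
  interval_cases m
  · have h23 : i 2 < i 3 := hinc 2 le_rfl (by norm_num)
    have hturn' : i 3 < i 2 + k := hturn (by norm_num)
    exact hasCloseRepeat_of_ne hpos2 hpos4 (by omega) (by omega) (by omega) hrep24
  · have h32 : i 3 < i 2 := hdec 2 (by norm_num) (by norm_num)
    have hturn' : i 4 < i 3 + k := hturn (by norm_num)
    by_cases h24 : i 2 = i 4
    · exact hasCloseRepeat_of_ne hpos1 hpos3 (by omega) (by omega) (by omega) hrep13
    · exact hasCloseRepeat_of_ne hpos2 hpos4 h24 (by omega) (by omega) hrep24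

theorem kBadIdx_pair {p q : ℕ} (hpq : p < q) (hqp : q ≤ p + k) (hS : S p = S q) :
    KBadIdx k S 1 2 (fun j => if j = 1 then q else p) := by
  refine ⟨le_rfl, one_lt_two, le_rfl, ?_, ?_, ?_, ?_, by omega⟩ <;>
    intro j hj1 hj2 <;> interval_cases j <;> simp [hS] <;> omega

theorem kBadIdx_square {p q : ℕ} (hpq : p + k < q) (hqp : q < p + 2 * k) (hS : S p = S q) :
    KBadIdx k S 2 2 (fun j => if j = 2 then p else if j = 4 then q else q - k) := by
  refine ⟨by norm_num, one_lt_two, by norm_num, ?_, ?_, ?_, ?_, fun _ => by simp; omega⟩ <;>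
    intro j hj1 hj2 <;> interval_cases j <;> simp [hS] <;> omega

end

theorem stmt5_general {α : Type*} (k : ℕ) (S : ℕ → α) :
    (∃ r m i, r ≤ 2 ∧ m ≤ 3 ∧ KBadIdx k S r m i ∧ ∀ j, 1 ≤ j → j ≤ 2 * r → 1 ≤ i j) ↔
    (∃ p q : ℕ, 1 ≤ p ∧ p < q ∧ q < p + 2 * k ∧ S p = S q) := by
  constructor
  · rintro ⟨r, m, i, hr, hm, hbad, hpos⟩
    exact hbad.hasCloseRepeat hr hm hpos
  · rintro ⟨p, q, hp, hpq, hqp, hS⟩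
    rcases le_or_gt q (p + k) with hnear | hfar
    · exact ⟨1, 2, _, by norm_num, by norm_num, kBadIdx_pair hpq hnear hS,
        fun j _ _ => by split_ifs <;> omega⟩
    · exact ⟨2, 2, _, le_rfl, by norm_num, kBadIdx_square hfar hqp hS,
        fun j _ _ => by split_ifs <;> omega⟩

/-- A sequence `S` has a `k`-bad index sequence of length at most four with turning index
`m ≤ 3` if and only if there are indices `p < q` with `q < p + 2k` and `S p = S q`. -/
theorem stmt5 {α : Type*} (k : ℕ) (hk : 1 ≤ k) (S : ℕ → α) :
    (∃ r m i, r ≤ 2 ∧ m ≤ 3 ∧ KBadIdx k S r m i ∧ ∀ j, 1 ≤ j → j ≤ 2 * r → 1 ≤ i j) ↔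
    (∃ p q : ℕ, 1 ≤ p ∧ p < q ∧ q < p + 2 * k ∧ S p = S q) :=
  stmt5_general k S
end

section
/- For every k ≥ 1 the sequence S_{2k,1} = 1,2,...,2k,1 is k-special, while S_{2k,2} = 1,2,...,2k,1,2 is not k-special; hence the maximum length f_k(2k) of a k-special sequence on 2k symbols equals 2k+1. -/
section

variable {α : Type*} {k r m n p q : ℕ} {S : ℕ → α} {i : ℕ → ℕ}

namespace KBadIdx

theorem strictAntiOn (h : KBadIdx k S r m i) : StrictAntiOn i (Set.Icc 1 m) :=
  strictAntiOn_of_add_one_lt Set.ordConnected_Icc fun a _ ha ha' => h.2.2.2.2.1 a ha.1 ha'.2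

theorem strictMonoOn (h : KBadIdx k S r m i) : StrictMonoOn i (Set.Icc m (2 * r)) :=
  strictMonoOn_of_lt_add_one Set.ordConnected_Icc fun a _ ha ha' => h.2.2.2.2.2.1 a ha.1 ha'.2

end KBadIdx

theorem eq_or_of_only_repeat
    (hS : ∀ p q, 1 ≤ p → p < q → q ≤ 2 * k + 1 → S p = S q → p = 1 ∧ q = 2 * k + 1)
    (hp : 1 ≤ p ∧ p ≤ 2 * k + 1) (hq : 1 ≤ q ∧ q ≤ 2 * k + 1) (h : S p = S q) :
    p = q ∨ p = 1 ∧ q = 2 * k + 1 ∨ p = 2 * k + 1 ∧ q = 1 := by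
  rcases lt_trichotomy p q with hpq | rfl | hqp
  · exact .inr (.inl (hS p q hp.1 hpq hq.2 h))
  · exact .inl rfl
  · exact .inr (.inr (hS q p hq.1 hqp hp.2 h.symm).symm)

theorem KBadIdx.turn_le_of_only_repeat
    (hS : ∀ p q, 1 ≤ p → p < q → q ≤ 2 * k + 1 → S p = S q → p = 1 ∧ q = 2 * k + 1)
    (h : KBadIdx k S r m i) (hi : ∀ j, 1 ≤ j → j ≤ 2 * r → 1 ≤ i j ∧ i j ≤ 2 * k + 1) :
    m ≤ r := by
  by_contra! hrm
  have hdesc := h.strictAntiOn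
  obtain ⟨hr, -, hm, hpair, hdec, -, hgap, hturn⟩ := h
  -- the first pair lies on the descent, so it is the repeat `(2k+1, 1)` and the valley is at `1`
  have h1 : i (1 + r) < i 1 := hdesc ⟨le_rfl, by omega⟩ ⟨by omega, by omega⟩ (by omega)
  obtain ⟨htop, hbot⟩ : i 1 = 2 * k + 1 ∧ i (1 + r) = 1 := by
    have := eq_or_of_only_repeat hS (hi 1 le_rfl (by omega)) (hi (1 + r) (by omega) (by omega))
      (hpair 1 le_rfl hr)
    omega
  obtain rfl : m = 1 + r := by
    by_contra hne
    have := hdec (1 + r) (by omega) (by omega)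
    have := hi (1 + r + 1) (by omega) (by omega)
    omega
  obtain rfl | hr2 := hr.eq_or_lt
  · have := hgap 1 le_rfl (by omega)
    omega
  have h2 : i (1 + r) < i 2 := hdesc ⟨by omega, by omega⟩ ⟨by omega, le_rfl⟩ (by omega)
  have h3 : i 2 < i 1 := hdec 1 le_rfl (by omega)
  have heq : i 2 = i (2 + r) := by
    have := eq_or_of_only_repeat hS (hi 2 (by omega) (by omega)) (hi (2 + r) (by omega) (by omega))
      (hpair 2 (by omega) hr2)
    omega
  have hgap1 : i 1 ≤ i 2 + k := (hgap 1 le_rfl (by omega)).2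
  have hturn' := hturn (by omega)
  rw [show 1 + r + 1 = 2 + r by omega] at hturn'
  omega

theorem KBadIdx.lt_turn_of_only_repeat
    (hS : ∀ p q, 1 ≤ p → p < q → q ≤ 2 * k + 1 → S p = S q → p = 1 ∧ q = 2 * k + 1)
    (h : KBadIdx k S r m i) (hi : ∀ j, 1 ≤ j → j ≤ 2 * r → 1 ≤ i j ∧ i j ≤ 2 * k + 1) :
    r < m := by
  by_contra! hmr
  have hdesc := h.strictAntiOn
  have hasc := h.strictMonoOn
  obtain ⟨hr, hm, -, hpair, -, hinc, hgap, hturn⟩ := h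
  -- the pair starting at the valley lies on the ascent, so it is the repeat `(1, 2k+1)`
  obtain ⟨hbot, htop⟩ : i m = 1 ∧ i (m + r) = 2 * k + 1 := by
    have := hasc ⟨le_rfl, by omega⟩ ⟨by omega, by omega⟩ (by omega : m < m + r)
    have := eq_or_of_only_repeat hS (hi m (by omega) (by omega)) (hi (m + r) (by omega) (by omega))
      (hpair m (by omega) hmr)
    omega
  obtain rfl : m = r := by
    by_contra hne
    have := hinc (m + r) (by omega) (by omega)
    have := hi (m + r + 1) (by omega) (by omega)
    omega
  have ha : i m < i (m - 1) := hdesc ⟨by omega, by omega⟩ ⟨by omega, le_rfl⟩ (by omega)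
  have hb : i m < i (m - 1 + m) := hasc ⟨le_rfl, by omega⟩ ⟨by omega, by omega⟩ (by omega)
  have hc : i (m - 1 + m) < i (m + m) := hasc ⟨by omega, by omega⟩ ⟨by omega, by omega⟩ (by omega)
  have heq : i (m - 1) = i (m - 1 + m) := by
    have := eq_or_of_only_repeat hS (hi (m - 1) (by omega) (by omega))
      (hi (m - 1 + m) (by omega) (by omega)) (hpair (m - 1) (by omega) (by omega))
    omega
  have hgap₁ := (hgap (m - 1) (by omega) (by omega)).2
  have hgap₂ := (hgap (m - 1 + m) (by omega) (by omega)).1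
  rw [Nat.sub_add_cancel (by omega)] at hgap₁
  rw [show m - 1 + m + 1 = m + m by omega] at hgap₂
  obtain hm2 | hm3 : m = 2 ∨ 3 ≤ m := by omega
  · have hturn' := hturn (by omega)
    rw [show m + 1 = m - 1 + m by omega] at hturn'
    omega
  have hd : i (m - 1) < i 1 := hdesc ⟨le_rfl, by omega⟩ ⟨by omega, by omega⟩ (by omega)
  have he : i m < i (1 + m) := hasc ⟨le_rfl, by omega⟩ ⟨by omega, by omega⟩ (by omega)
  have hf : i (1 + m) < i (m - 1 + m) :=
    hasc ⟨by omega, by omega⟩ ⟨by omega, by omega⟩ (by omega)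
  have := eq_or_of_only_repeat hS (hi 1 le_rfl (by omega)) (hi (1 + m) (by omega) (by omega))
    (hpair 1 le_rfl (by omega))
  omega

theorem kSpecialFin_of_only_repeat
    (hS : ∀ p q, 1 ≤ p → p < q → q ≤ 2 * k + 1 → S p = S q → p = 1 ∧ q = 2 * k + 1) :
    KSpecialFin k S (2 * k + 1) := by
  rintro ⟨r, m, i, h, hi⟩
  exact (h.turn_le_of_only_repeat hS hi).not_gt (h.lt_turn_of_only_repeat hS hi)

theorem not_kSpecialFin_of_eq_of_le_add (hp : 1 ≤ p) (hpq : p < q) (hqp : q ≤ p + k)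
    (hqn : q ≤ n) (hS : S p = S q) : ¬ KSpecialFin k S n := by
  refine fun h => h ⟨1, 2, fun j => if j = 1 then q else p,
    ⟨le_rfl, one_lt_two, le_rfl, ?_, ?_, ?_, ?_, ?_⟩, ?_⟩ <;>
    intro j <;> try (intro hj hj'; interval_cases j)
  all_goals simp_all <;> omega

theorem not_kSpecialFin_of_eq_of_add_lt_of_lt_add (hp : 1 ≤ p) (hpq : p + k < q)
    (hqp : q < p + 2 * k) (hqn : q ≤ n) (hS : S p = S q) : ¬ KSpecialFin k S n := by
  refine fun h => h ⟨2, 2, fun j => if j = 2 then p else if j = 4 then q else q - k,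
    ⟨by omega, by omega, by omega, ?_, ?_, ?_, ?_, ?_⟩, ?_⟩ <;>
    intro j <;> try (intro hj hj'; interval_cases j)
  all_goals simp_all <;> omega

theorem not_kSpecialFin_of_eq_of_lt_add (hp : 1 ≤ p) (hpq : p < q) (hqp : q < p + 2 * k)
    (hqn : q ≤ n) (hS : S p = S q) : ¬ KSpecialFin k S n := by
  rcases le_or_gt q (p + k) with hq | hq
  · exact not_kSpecialFin_of_eq_of_le_add hp hpq hq hqn hS
  · exact not_kSpecialFin_of_eq_of_add_lt_of_lt_add hp hq hqp hqn hS

theorem not_kSpecialFin_of_repeats_one_two (hk : 1 ≤ k) (h₁ : S 1 = S (1 + 2 * k))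
    (h₂ : S 2 = S (2 + 2 * k)) (hn : 2 + 2 * k ≤ n) : ¬ KSpecialFin k S n := by
  obtain rfl | hk := hk.eq_or_lt
  · refine fun h => h ⟨2, 4, fun j => 5 - j,
      ⟨by omega, by omega, by omega, ?_, ?_, ?_, ?_, ?_⟩, ?_⟩ <;>
      intro j <;> try (intro hj hj'; interval_cases j)
    all_goals simp_all <;> omega
  -- pairs `(k+1, k+1)`, `(1, 2k+1)`, `(2, 2k+2)`; the turn bound `2 < 1 + k` needs `k ≥ 2`
  · refine fun h => h ⟨3, 2, fun j => if j = 2 then 1 else if j = 3 then 2 else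
        if j = 5 then 1 + 2 * k else if j = 6 then 2 + 2 * k else k + 1,
      ⟨by omega, by omega, by omega, ?_, ?_, ?_, ?_, ?_⟩, ?_⟩ <;>
      intro j <;> try (intro hj hj'; interval_cases j)
    all_goals simp_all <;> omega

theorem KSpecialFin.apply_eq_apply_add_two_mul [DecidableEq α] {a : ℕ}
    (hS : KSpecialFin k S n) (hcard : ((Finset.Icc 1 n).image S).card ≤ 2 * k) (ha : 1 ≤ a)
    (han : a + 2 * k ≤ n) : S a = S (a + 2 * k) := by
  have hwindow : ∀ x ∈ Finset.Icc a (a + 2 * k), ∀ y ∈ Finset.Icc a (a + 2 * k),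
      x < y → S x = S y → S a = S (a + 2 * k) := by
    intro x hx y hy hxy hSxy
    simp only [Finset.mem_Icc] at hx hy
    by_cases hclose : y < x + 2 * k
    · exact (not_kSpecialFin_of_eq_of_lt_add (by omega) hxy hclose (by omega) hSxy hS).elim
    · obtain ⟨rfl, rfl⟩ : x = a ∧ y = a + 2 * k := by omega
      exact hSxy
  have hmaps : ∀ x ∈ Finset.Icc a (a + 2 * k), S x ∈ (Finset.Icc 1 n).image S := fun x hx => by
    simp only [Finset.mem_Icc] at hx
    exact Finset.mem_image_of_mem S (Finset.mem_Icc.mpr ⟨by omega, by omega⟩)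
  obtain ⟨x, hx, y, hy, hxy, hSxy⟩ :=
    Finset.exists_ne_map_eq_of_card_lt_of_maps_to (by rw [Nat.card_Icc]; omega) hmaps
  rcases hxy.lt_or_gt with hxy | hyx
  · exact hwindow x hx y hy hxy hSxy
  · exact hwindow y hy x hx hyx hSxy.symm

end

/-- `S_{2k,1} = 1, …, 2k, 1` is `k`-special, `S_{2k,2} = 1, …, 2k, 1, 2` is not, and every
`k`-special sequence on `2k` symbols has length at most `2k + 1`; hence the maximum length
`f_k(2k)` of a `k`-special sequence on `2k` symbols equals `2k + 1`. -/
theorem stmt8 (k : ℕ) (hk : 1 ≤ k) :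
    KSpecialFin k (Snc (2 * k) 1) (2 * k + 1) ∧
    ¬ KSpecialFin k (Snc (2 * k) 2) (2 * k + 2) ∧
    (∀ (S : ℕ → ℕ) (L : ℕ), ((Finset.Icc 1 L).image S).card ≤ 2 * k →
      KSpecialFin k S L → L ≤ 2 * k + 1) := by
  refine ⟨kSpecialFin_of_only_repeat fun p q hp hpq hq h => ?_, ?_, fun S L hcard hS => ?_⟩
  · simp only [Snc] at h
    split_ifs at h <;> omega
  · refine not_kSpecialFin_of_repeats_one_two hk ?_ ?_ (by omega) <;>
      simp only [Snc] <;> split_ifs <;> omega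
  · by_contra! hL
    exact not_kSpecialFin_of_repeats_one_two hk
      (hS.apply_eq_apply_add_two_mul hcard le_rfl (by omega))
      (hS.apply_eq_apply_add_two_mul hcard (by omega) (by omega)) (by omega) hS
end

section
/- An infinite sequence S is k-special if and only if the edge-coloring of the infinite k-ary tree T_k derived from S is nonrepetitive. -/
/-- The infinite `k`-ary tree: vertices are finite words over `Fin k` (the root is `[]`,
and the children of `v`, in left-to-right order, are `j :: v` for `j : Fin k`). -/
def kTree (k : ℕ) : SimpleGraph (List (Fin k)) :=
  SimpleGraph.fromRel (fun u v => ∃ j : Fin k, u = j :: v)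

/-- The (1-based) position in the defining sequence of the color of the edge joining a
non-root vertex to its parent: the edges from the root get positions `1, …, k` left to
right, and if the edge from `v` to its parent has position `i`, then the edges to the
children of `v` get positions `i + 1, …, i + k` left to right. -/
def edgeIdx {k : ℕ} : List (Fin k) → ℕ
  | [] => 0
  | j :: v => edgeIdx v + (j : ℕ) + 1

/-- The edge-coloring of the infinite `k`-ary tree derived from the 1-indexed sequence `S`. -/
def derivedColoring (k : ℕ) (S : ℕ → ℕ) : Sym2 (List (Fin k)) → ℕ :=
  Sym2.lift ⟨fun u v =>
    if v.length < u.length then S (edgeIdx u)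
    else if u.length < v.length then S (edgeIdx v) else 0, by
      intro u v
      rcases lt_trichotomy u.length v.length with h | h | h <;>
        simp [h, lt_asymm, lt_irrefl]⟩

/-!
A vertex of `T_k` is a word, a path climbs from `ls₁ ++ a` to the common ancestor `a` and then
descends to `ls₂ ++ a`, and the colour of an edge is `S` at the position `edgeIdx` of its lower
endpoint. So the positions read along a path first decrease and then increase, in steps of at most
`k`; the two edges at `a` lead to different children of `a`, so their positions are distinct and
differ by less than `k`. Conversely, every such sequence of positions is read along some path.
Reversing the path if necessary, the turn can be put at the smaller of the two positions at `a`,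
with at least two positions before it (or the sequence is monotone), and then the sequence is
exactly a `k`-bad index sequence.
-/

open List

theorem List.isChain_reverse_append_singleton {α : Type*} {R : α → α → Prop} {x : α}
    {l : List α} : (l.reverse ++ [x]).IsChain R ↔ (x :: l).IsChain (flip R) := by
  rw [← reverse_cons, isChain_reverse]
  rfl

theorem List.isChain_cons_reverse {α : Type*} {R : α → α → Prop} {x : α} {l : List α} :
    (x :: l.reverse).IsChain (flip R) ↔ (l ++ [x]).IsChain R := by
  rw [← reverse_concat', isChain_reverse]
  rfl

theorem List.IsChain.rel_getD_append_left {α : Type*} {R : α → α → Prop} {l : List α}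
    (h : l.IsChain R) (l' : List α) (d : α) {j : ℕ} (hj : j + 1 < l.length) :
    R ((l ++ l').getD j d) ((l ++ l').getD (j + 1) d) := by
  rw [getD_append _ _ _ _ (by omega), getD_append _ _ _ _ hj, getD_eq_getElem, getD_eq_getElem]
  exact h.getElem j hj

theorem List.IsChain.rel_getD_append_right {α : Type*} {R : α → α → Prop} {l' : List α}
    (h : l'.IsChain R) (l : List α) (d : α) {j : ℕ} (hj : j + 1 < l'.length) :
    R ((l ++ l').getD (l.length + j) d) ((l ++ l').getD (l.length + j + 1) d) := by
  rw [getD_append_right _ _ _ _ (by omega), getD_append_right _ _ _ _ (by omega),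
    Nat.add_sub_cancel_left, show l.length + j + 1 - l.length = j + 1 by omega,
    getD_eq_getElem, getD_eq_getElem]
  exact h.getElem j hj

theorem IsRepetition.reverse {α : Type*} {l : List α} (h : IsRepetition l) :
    IsRepetition l.reverse := by
  obtain ⟨w, hw, rfl⟩ := h
  exact ⟨w.reverse, by simpa using hw, by simp⟩

theorem isRepetition_map_range {α : Type*} {f : ℕ → α} {r : ℕ} (hr : 0 < r)
    (hf : ∀ j < r, f (j + r) = f j) : IsRepetition ((range (2 * r)).map f) := by
  refine ⟨(range r).map f, by simpa using hr.ne', ?_⟩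
  rw [two_mul, range_add, map_append, map_map]
  congr 1
  exact map_congr_left fun j hj => by simpa [add_comm] using hf j (mem_range.1 hj)

theorem IsRepetition.two_le_length {α : Type*} {l : List α} (h : IsRepetition l) :
    2 ≤ l.length := by
  obtain ⟨w, hw, rfl⟩ := h
  have := length_pos_iff.2 hw
  simp only [length_append]
  omega

/-- A step `x → y` of the decreasing part of a `k`-bad index sequence; the increasing part
takes steps `flip (KStep k)`. -/
def KStep (k x y : ℕ) : Prop := y < x ∧ x ≤ y + k

/-- The positions read along a path of `T_k`: `D` on the way up to the common ancestor, whose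
parent edge has position `e` (`e = 0` at the root), then `A` on the way down. -/
def IsTreePathIdx (k : ℕ) (L : List ℕ) : Prop :=
  ∃ e D A, L = D ++ A ∧ (D ++ [e]).IsChain (KStep k) ∧ (e :: A).IsChain (flip (KStep k)) ∧
    ∀ x ∈ D.getLast?, x ∉ A.head?

/-- `KBadIdx` as a list: the turning index `m` is the position of `x`. -/
def IsValleyIdx (k : ℕ) (L : List ℕ) : Prop :=
  ∃ D x A, L = D ++ x :: A ∧ D ≠ [] ∧ (D ++ [x]).IsChain (KStep k) ∧
    (x :: A).IsChain (flip (KStep k)) ∧ ∀ y ∈ A.head?, y < x + k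

section IndexLists

variable {k : ℕ} {L : List ℕ}

theorem IsTreePathIdx.one_le (h : IsTreePathIdx k L) : ∀ x ∈ L, 1 ≤ x := by
  obtain ⟨e, D, A, rfl, hD, hA, -⟩ := h
  have hD' : (D ++ [e]).Pairwise (· > ·) := (hD.imp fun _ _ h => h.1).pairwise
  have hA' : (e :: A).Pairwise (· < ·) := (hA.imp fun _ _ h => h.1).pairwise
  simp only [pairwise_append, pairwise_cons, mem_singleton] at hD' hA'
  intro x hx
  rcases mem_append.1 hx with hx | hx
  · have := hD'.2.2 x hx e rfl
    omega
  · have := hA'.1 x hx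
    omega

theorem isValleyIdx_or_reverse_of_lt {e : ℕ} {D A : List ℕ}
    (hD : (D ++ [e]).IsChain (KStep k)) (hA : (e :: A).IsChain (flip (KStep k))) (hne : D ≠ [])
    (hlt : ∀ x ∈ D.getLast?, ∀ y ∈ A.head?, x < y) (hlen : 2 ≤ (D ++ A).length) :
    IsValleyIdx k (D ++ A) ∨ IsValleyIdx k (D ++ A).reverse := by
  obtain ⟨D, x, rfl⟩ := (eq_nil_or_concat D).resolve_left hne
  rw [concat_eq_append, append_assoc, singleton_append, isChain_append_cons_cons] at hD
  obtain ⟨hD, hxe, -⟩ := hD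
  have hxA : (x :: A).IsChain (flip (KStep k)) := by
    cases A with
    | nil => exact isChain_singleton x
    | cons y A =>
      rw [isChain_cons_cons] at hA ⊢
      have hxy := hlt x (by simp) y rfl
      exact ⟨⟨hxy, by have := hA.1.2; have := hxe.1; omega⟩, hA.2⟩
  rcases eq_or_ne D [] with rfl | hD'
  · right
    refine ⟨A.reverse, x, [], by simp, fun h => ?_, isChain_reverse_append_singleton.2 hxA,
      isChain_singleton x, by simp⟩
    simp_all
  · left
    refine ⟨D, x, A, by simp, hD', hD, hxA, fun y hy => ?_⟩
    cases A with
    | nil => simp at hy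
    | cons y' A =>
      obtain rfl : y' = y := by simpa using hy
      have := (isChain_cons_cons.1 hA).1.2
      have := hxe.1
      omega

theorem IsTreePathIdx.isValleyIdx_or_reverse (h : IsTreePathIdx k L) (hlen : 2 ≤ L.length) :
    IsValleyIdx k L ∨ IsValleyIdx k L.reverse := by
  obtain ⟨e, D, A, rfl, hD, hA, hlast⟩ := h
  have rise (hne : D ≠ []) (hlt : ∀ x ∈ D.getLast?, ∀ y ∈ A.head?, x < y) :
      IsValleyIdx k (D ++ A) ∨ IsValleyIdx k (D ++ A).reverse :=
    isValleyIdx_or_reverse_of_lt hD hA hne hlt hlen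
  have fall (hne : A ≠ []) (hlt : ∀ y ∈ A.head?, ∀ x ∈ D.getLast?, y < x) :
      IsValleyIdx k (D ++ A) ∨ IsValleyIdx k (D ++ A).reverse := by
    have := isValleyIdx_or_reverse_of_lt (isChain_reverse_append_singleton.2 hA)
      (isChain_cons_reverse.2 hD) (by simpa using hne) (by simpa using hlt)
      (by simpa [add_comm] using hlen)
    rwa [← reverse_append, reverse_reverse, or_comm] at this
  rcases hx : D.getLast? with _ | x <;> rcases hy : A.head? with _ | y
  · simp_all
  · exact fall (by rintro rfl; simp at hy) (by simp [hx])
  · exact rise (by rintro rfl; simp at hx) (by simp [hy])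
  · have hxy : x ≠ y := fun h => by simp_all
    rcases hxy.lt_or_gt with hxy | hxy
    · exact rise (by rintro rfl; simp at hx) (by simp [hx, hy, hxy])
    · exact fall (by rintro rfl; simp at hy) (by simp [hx, hy, hxy])

theorem IsValleyIdx.isTreePathIdx (h : IsValleyIdx k L) (hpos : ∀ x ∈ L, 1 ≤ x) :
    IsTreePathIdx k L := by
  obtain ⟨D, x, A, rfl, hne, hD, hA, hturn⟩ := h
  have hk : 1 ≤ k := by
    obtain ⟨h₁, h₂⟩ := hD.rel_getLast_head_of_append hne (cons_ne_nil x [])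
    simp only [head_cons] at h₁ h₂
    omega
  have hx : 1 ≤ x := hpos x (by simp)
  refine ⟨x - 1, D ++ [x], A, by simp, hD.append (isChain_singleton _) ?_, ?_, ?_⟩
  · simp only [getLast?_concat, Option.mem_def, head?_cons, Option.some.injEq]
    rintro _ rfl _ rfl
    exact ⟨by omega, by omega⟩
  · cases A with
    | nil => exact isChain_singleton _
    | cons y A =>
      rw [isChain_cons_cons] at hA ⊢
      have := hturn y rfl
      exact ⟨⟨by have := hA.1.1; omega, by omega⟩, hA.2⟩
  · cases A with
    | nil => simp
    | cons y A =>
      have := (isChain_cons_cons.1 hA).1.1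
      simp only [getLast?_concat, Option.mem_def, head?_cons, Option.some.injEq]
      omega

variable {α : Type*} {S : ℕ → α}

theorem exists_isValleyIdx_of_kBadIdx {r m : ℕ} {i : ℕ → ℕ} (hbad : KBadIdx k S r m i)
    (hpos : ∀ j, 1 ≤ j → j ≤ 2 * r → 1 ≤ i j) :
    ∃ L, IsValleyIdx k L ∧ (∀ x ∈ L, 1 ≤ x) ∧ IsRepetition (L.map S) := by
  obtain ⟨hr, hm1, hm2, hrep, hdec, hinc, hgap, hturn⟩ := hbad
  obtain ⟨m, rfl⟩ : ∃ m', m = m' + 1 := ⟨m - 1, by omega⟩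
  obtain ⟨n, hn⟩ : ∃ n, 2 * r = m + 1 + n := ⟨2 * r - (m + 1), by omega⟩
  have hL : (range (2 * r)).map (fun j => i (j + 1)) =
      (range m).map (fun j => i (j + 1)) ++ i (m + 1) :: (range n).map (fun j => i (m + 1 + j + 1)) := by
    rw [hn, range_add, range_succ]
    simp [Function.comp_def, add_assoc]
  refine ⟨_, ⟨_, i (m + 1), _, hL, by simpa using (by omega : m ≠ 0), ?_, ?_, ?_⟩, ?_, ?_⟩
  · rw [show (range m).map (fun j => i (j + 1)) ++ [i (m + 1)] =
      (range (m + 1)).map (fun j => i (j + 1)) by simp [range_succ], isChain_map, isChain_range]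
    intro j hj
    exact ⟨hdec (j + 1) (by omega) (by omega), (hgap (j + 1) (by omega) (by omega)).2⟩
  · rw [show i (m + 1) :: (range n).map (fun j => i (m + 1 + j + 1)) =
      (range (n + 1)).map (fun j => i (m + 1 + j)) by simp [range_succ_eq_map, Function.comp_def, add_assoc],
      isChain_map, isChain_range]
    intro j hj
    exact ⟨hinc (m + 1 + j) (by omega) (by omega), (hgap (m + 1 + j) (by omega) (by omega)).1⟩
  · cases n with
    | zero => simp
    | succ n =>
      simp only [range_succ_eq_map, map_cons, head?_cons, Option.mem_def, Option.some.injEq]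
      rintro _ rfl
      exact hturn (by omega)
  · simp only [mem_map, mem_range]
    rintro _ ⟨j, hj, rfl⟩
    exact hpos (j + 1) (by omega) (by omega)
  · rw [map_map]
    refine isRepetition_map_range hr fun j hj => ?_
    simpa [add_right_comm] using (hrep (j + 1) (by omega) (by omega)).symm

theorem exists_kBadIdx_of_isValleyIdx (h : IsValleyIdx k L) (hpos : ∀ x ∈ L, 1 ≤ x)
    (hrep : IsRepetition (L.map S)) :
    ∃ r m i, KBadIdx k S r m i ∧ ∀ j, 1 ≤ j → j ≤ 2 * r → 1 ≤ i j := by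
  obtain ⟨D, x, A, rfl, hne, hD, hA, hturn⟩ := h
  obtain ⟨w, hw, hLw⟩ := hrep
  have hlen : D.length + 1 + A.length = 2 * w.length := by
    have := congrArg length hLw
    simp only [length_map, length_append, length_cons] at this
    omega
  have hdown (j : ℕ) (hj : j < D.length) :
      KStep k ((D ++ x :: A).getD j 0) ((D ++ x :: A).getD (j + 1) 0) := by
    simpa using hD.rel_getD_append_left A 0 (j := j) (by simpa using hj)
  have hup (j : ℕ) (hj : j < A.length) :
      KStep k ((D ++ x :: A).getD (D.length + j + 1) 0) ((D ++ x :: A).getD (D.length + j) 0) :=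
    hA.rel_getD_append_right D 0 (j := j) (by simpa using hj)
  refine ⟨w.length, D.length + 1, fun j => (D ++ x :: A).getD (j - 1) 0,
    ⟨length_pos_iff.2 hw, by simpa using length_pos_iff.2 hne, by omega, ?_, ?_, ?_, ?_, ?_⟩, ?_⟩
  · intro j hj₁ hj₂
    simp only
    rw [← getD_map (f := S), ← getD_map (f := S), hLw, getD_append _ _ _ _ (by omega),
      getD_append_right _ _ _ _ (by omega)]
    congr 1
    omega
  · intro j hj₁ hj₂
    obtain ⟨j, rfl⟩ : ∃ j', j = j' + 1 := ⟨j - 1, by omega⟩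
    simpa using (hdown j (by omega)).1
  · intro j hj₁ hj₂
    obtain ⟨j, rfl⟩ : ∃ j', j = D.length + j' + 1 := ⟨j - (D.length + 1), by omega⟩
    simpa using (hup j (by omega)).1
  · intro j hj₁ hj₂
    by_cases hj : j < D.length + 1
    · obtain ⟨j, rfl⟩ : ∃ j', j = j' + 1 := ⟨j - 1, by omega⟩
      obtain ⟨h₁, h₂⟩ := hdown j (by omega)
      simp only [Nat.add_sub_cancel]
      exact ⟨by omega, h₂⟩
    · obtain ⟨j, rfl⟩ : ∃ j', j = D.length + j' + 1 := ⟨j - (D.length + 1), by omega⟩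
      obtain ⟨h₁, h₂⟩ := hup j (by omega)
      simp only [Nat.add_sub_cancel]
      exact ⟨h₂, by omega⟩
  · intro h
    cases A with
    | nil => simp only [length_nil, add_zero] at hlen; omega
    | cons y A => simpa [getD_append_right] using hturn y rfl
  · intro j hj₁ hj₂
    simp only
    rw [getD_eq_getElem _ _ (by simp only [length_append, length_cons]; omega)]
    exact hpos _ (getElem_mem _)

end IndexLists

theorem kSpecialInf_iff_forall_isTreePathIdx {k : ℕ} {S : ℕ → ℕ} :
    KSpecialInf k S ↔ ∀ L, IsTreePathIdx k L → ¬IsRepetition (L.map S) := by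
  refine ⟨fun hS L hL hrep => ?_, fun h ⟨r, m, i, hbad, hpos⟩ => ?_⟩
  · rcases hL.isValleyIdx_or_reverse (by simpa using hrep.two_le_length) with hv | hv
    · exact hS (exists_kBadIdx_of_isValleyIdx hv hL.one_le hrep)
    · refine hS (exists_kBadIdx_of_isValleyIdx hv (by simpa using hL.one_le) ?_)
      simpa using hrep.reverse
  · obtain ⟨L, hv, hpos, hrep⟩ := exists_isValleyIdx_of_kBadIdx hbad hpos
    exact h L (hv.isTreePathIdx hpos) hrep

section Tree

open SimpleGraph

variable {k : ℕ}

theorem kTree_adj {u v : List (Fin k)} :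
    (kTree k).Adj u v ↔ (∃ j, u = j :: v) ∨ ∃ j, v = j :: u := by
  rw [kTree, fromRel_adj, and_iff_right_iff_imp]
  rintro (⟨j, rfl⟩ | ⟨j, rfl⟩) <;> simp [eq_comm]

theorem kTree_adj_cons (j : Fin k) (v : List (Fin k)) : (kTree k).Adj (j :: v) v :=
  kTree_adj.2 (Or.inl ⟨j, rfl⟩)

theorem derivedColoring_cons_self (S : ℕ → ℕ) (j : Fin k) (v : List (Fin k)) :
    derivedColoring k S s(j :: v, v) = S (edgeIdx (j :: v)) := by
  simp [derivedColoring]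

theorem derivedColoring_self_cons (S : ℕ → ℕ) (j : Fin k) (v : List (Fin k)) :
    derivedColoring k S s(v, j :: v) = S (edgeIdx (j :: v)) := by
  rw [Sym2.eq_swap, derivedColoring_cons_self]

theorem exists_edgeIdx_eq (hk : 1 ≤ k) (e : ℕ) : ∃ a : List (Fin k), edgeIdx a = e :=
  ⟨replicate e ⟨0, hk⟩, by induction e <;> simp_all [replicate_succ, edgeIdx]⟩

def upIdx (a : List (Fin k)) : List (Fin k) → List ℕ
  | [] => []
  | j :: ls => edgeIdx (j :: (ls ++ a)) :: upIdx a ls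

def upWalk (a : List (Fin k)) : (ls : List (Fin k)) → (kTree k).Walk (ls ++ a) a
  | [] => .nil
  | j :: ls => .cons (kTree_adj_cons j (ls ++ a)) (upWalk a ls)

theorem upIdx_append (a ls ls' : List (Fin k)) :
    upIdx a (ls ++ ls') = upIdx (ls' ++ a) ls ++ upIdx a ls' := by
  induction ls with
  | nil => rfl
  | cons j ls ih => simp [upIdx, ih]

theorem getLast?_upIdx (a ls : List (Fin k)) :
    (upIdx a ls).getLast? = ls.getLast?.map fun j : Fin k => edgeIdx a + (j : ℕ) + 1 := by
  rcases eq_nil_or_concat ls with rfl | ⟨ls, j, rfl⟩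
  · rfl
  · simp [upIdx_append, upIdx, edgeIdx]

theorem head?_upIdx_append_singleton (a ls : List (Fin k)) :
    (upIdx a ls ++ [edgeIdx a]).head? = some (edgeIdx (ls ++ a)) := by
  cases ls <;> rfl

theorem isChain_upIdx_append_singleton (a ls : List (Fin k)) :
    (upIdx a ls ++ [edgeIdx a]).IsChain (KStep k) := by
  induction ls with
  | nil => exact isChain_singleton _
  | cons j ls ih =>
    rw [upIdx, cons_append, isChain_cons, head?_upIdx_append_singleton]
    refine ⟨fun y hy => ?_, ih⟩
    obtain rfl := Option.mem_some_iff.1 hy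
    simp only [KStep, edgeIdx]
    omega

theorem exists_upIdx_eq {a : List (Fin k)} :
    ∀ {D : List ℕ}, (D ++ [edgeIdx a]).IsChain (KStep k) → ∃ ls, upIdx a ls = D
  | [], _ => ⟨[], rfl⟩
  | x :: D, h => by
    obtain ⟨ls, rfl⟩ := exists_upIdx_eq (isChain_cons.1 h).2
    have hx := (isChain_cons.1 h).1 _ (head?_upIdx_append_singleton a ls)
    refine ⟨⟨x - edgeIdx (ls ++ a) - 1, by simp only [KStep] at hx; omega⟩ :: ls, ?_⟩
    simp only [KStep] at hx
    simp only [upIdx, edgeIdx, cons.injEq, and_true]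
    omega

theorem map_edges_upWalk (S : ℕ → ℕ) (a ls : List (Fin k)) :
    (upWalk a ls).edges.map (derivedColoring k S) = (upIdx a ls).map S := by
  induction ls with
  | nil => rfl
  | cons j ls ih => simp [upWalk, upIdx, derivedColoring_cons_self, ih]

theorem mem_support_upWalk {a ls x : List (Fin k)} :
    x ∈ (upWalk a ls).support ↔ ∃ t, t <:+ ls ∧ x = t ++ a := by
  induction ls with
  | nil => simp [upWalk]
  | cons j ls ih => simp [upWalk, ih, suffix_cons_iff, or_and_right, exists_or]

theorem cons_not_mem_support_upWalk (a ls : List (Fin k)) (j : Fin k) :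
    j :: (ls ++ a) ∉ (upWalk a ls).support := by
  rw [mem_support_upWalk]
  rintro ⟨t, ht, he⟩
  have := congrArg length he
  have := ht.length_le
  simp only [length_cons, length_append] at *
  omega

theorem isPath_upWalk (a ls : List (Fin k)) : (upWalk a ls).IsPath := by
  induction ls with
  | nil => exact Walk.IsPath.nil
  | cons j ls ih => exact (Walk.cons_isPath_iff _ _).2 ⟨ih, cons_not_mem_support_upWalk a ls j⟩

theorem isPath_upWalk_append_reverse {a : List (Fin k)} :
    ∀ {ls₁ ls₂ : List (Fin k)}, (∀ j ∈ ls₁.getLast?, j ∉ ls₂.getLast?) →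
      ((upWalk a ls₁).append (upWalk a ls₂).reverse).IsPath
  | [], ls₂, _ => by simpa [upWalk] using (isPath_upWalk a ls₂).reverse
  | j :: ls₁, ls₂, h => by
    rw [upWalk, Walk.cons_append, Walk.cons_isPath_iff, Walk.mem_support_append_iff,
      Walk.support_reverse, mem_reverse, mem_support_upWalk (ls := ls₂)]
    refine ⟨isPath_upWalk_append_reverse ?_, not_or.2 ⟨cons_not_mem_support_upWalk a ls₁ j, ?_⟩⟩
    · cases ls₁ with
      | nil => simp
      | cons j' ls₁ => simpa using h
    · rintro ⟨t, ⟨s, rfl⟩, he⟩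
      obtain rfl : j :: ls₁ = t := append_cancel_right (by simpa using he)
      rw [getLast?_append_of_ne_nil _ (cons_ne_nil _ _)] at h
      exact h _ (getLast?_eq_some_getLast (cons_ne_nil _ _)) rfl

/-- The membership conditions are the induction invariant that rules out backtracking: a step
back down from `ls₁ ++ a`, or up onto the child of `a` towards `v`, would revisit `P`. -/
theorem exists_upIdx_of_isPath (S : ℕ → ℕ) {u v : List (Fin k)} (P : (kTree k).Walk u v)
    (hP : P.IsPath) :
    ∃ a ls₁ ls₂, u = ls₁ ++ a ∧ v = ls₂ ++ a ∧ ls₁.tail ++ a ∈ P.support ∧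
      (∀ j ∈ ls₂.getLast?, j :: a ∈ P.support) ∧ (∀ j ∈ ls₁.getLast?, j ∉ ls₂.getLast?) ∧
      P.edges.map (derivedColoring k S) = (upIdx a ls₁ ++ (upIdx a ls₂).reverse).map S := by
  induction P with
  | nil => exact ⟨_, [], [], rfl, rfl, by simp, by simp, by simp, rfl⟩
  | @cons u w v h Q ih =>
    obtain ⟨hQ, hu⟩ := (Walk.cons_isPath_iff h Q).1 hP
    obtain ⟨a, ls₁, ls₂, rfl, rfl, h₁, h₂, hlast, hcol⟩ := ih hQ
    rcases kTree_adj.1 h with ⟨j, rfl⟩ | ⟨j, hw⟩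
    · refine ⟨a, j :: ls₁, ls₂, rfl, rfl, ?_, fun j hj => ?_, ?_, ?_⟩
      · simp
      · exact mem_cons_of_mem _ (h₂ j hj)
      · cases ls₁ with
        | nil =>
          intro j' hj' hj
          obtain rfl : j = j' := by simpa using hj'
          exact hu (by simpa using h₂ j hj)
        | cons j' ls₁ => simpa using hlast
      · simp [derivedColoring_cons_self, upIdx, hcol]
    · cases ls₁ with
      | cons j' t =>
        obtain ⟨-, rfl⟩ := cons.inj hw
        exact absurd h₁ hu
      | nil =>
        obtain rfl : a = j :: u := hw
        refine ⟨u, [], ls₂ ++ [j], rfl, by simp, by simp, fun j' hj' => ?_, by simp, ?_⟩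
        · obtain rfl : j = j' := by simpa using hj'
          simp
        · simp [derivedColoring_self_cons, upIdx_append, upIdx, hcol]

theorem nonrepEdgeColoring_derivedColoring_iff (hk : 1 ≤ k) (S : ℕ → ℕ) :
    NonrepEdgeColoring (kTree k) (derivedColoring k S) ↔
      ∀ L, IsTreePathIdx k L → ¬IsRepetition (L.map S) := by
  refine ⟨fun hN L ⟨e, D, A, hL, hD, hA, hlast⟩ hrep => ?_, fun h u v P hP hrep => ?_⟩
  · obtain ⟨a, rfl⟩ := exists_edgeIdx_eq hk e
    obtain ⟨ls₁, rfl⟩ := exists_upIdx_eq hD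
    obtain ⟨ls₂, hls₂⟩ := exists_upIdx_eq (a := a) (D := A.reverse)
      (isChain_reverse_append_singleton.2 hA)
    obtain rfl : A = (upIdx a ls₂).reverse := by simp [hls₂]
    refine hN _ _ ((upWalk a ls₁).append (upWalk a ls₂).reverse)
      (isPath_upWalk_append_reverse fun j hj hj' => ?_) ?_
    · refine hlast (edgeIdx a + j + 1) ?_ ?_
      · rw [getLast?_upIdx, Option.mem_def.1 hj]; rfl
      · rw [head?_reverse, getLast?_upIdx, Option.mem_def.1 hj']; rfl
    · simpa [Walk.edges_append, map_edges_upWalk, hL] using hrep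
  · obtain ⟨a, ls₁, ls₂, rfl, rfl, -, -, hlast, hcol⟩ := exists_upIdx_of_isPath S P hP
    refine h _ ⟨edgeIdx a, upIdx a ls₁, (upIdx a ls₂).reverse, rfl,
      isChain_upIdx_append_singleton a ls₁, ?_, ?_⟩ (hcol ▸ hrep)
    · exact isChain_cons_reverse.2 (isChain_upIdx_append_singleton a ls₂)
    · intro x hx hx'
      rw [getLast?_upIdx] at hx
      rw [head?_reverse, getLast?_upIdx] at hx'
      obtain ⟨j, hj, rfl⟩ := Option.map_eq_some_iff.1 hx
      obtain ⟨j', hj', he⟩ := Option.map_eq_some_iff.1 hx'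
      exact hlast j hj (Fin.ext (by omega : (j' : ℕ) = j) ▸ hj')

end Tree

/-- An infinite sequence `S` is `k`-special if and only if the edge-coloring of the
infinite `k`-ary tree derived from `S` is nonrepetitive. -/
theorem stmt12 (k : ℕ) (hk : 1 ≤ k) (S : ℕ → ℕ) :
    KSpecialInf k S ↔ NonrepEdgeColoring (kTree k) (derivedColoring k S) :=
  kSpecialInf_iff_forall_isTreePathIdx.trans (nonrepEdgeColoring_derivedColoring_iff hk S).symm
end

section
/- For every k ≥ 1, if S is an infinite square-free sequence over 3 symbols, then the sequence S^+ = S^{(k+1)} over 3(k+1) symbols (each symbol t replaced by the block t^{(0)},...,t^{(k)}) is k-special; consequently π'(T_k) ≤ 3k + 3. -/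
/-- An infinite 1-indexed sequence is square-free (nonrepetitive) if no contiguous block
is a repetition. -/
def SeqSquareFree {α : Type*} (S : ℕ → α) : Prop :=
  ¬ ∃ p r : ℕ, 1 ≤ p ∧ 1 ≤ r ∧ ∀ j < r, S (p + j) = S (p + r + j)

/-- An infinite 1-indexed sequence is palindrome-free if no contiguous block of length at
least 2 reads the same forwards and backwards. -/
def SeqPalindromeFree {α : Type*} (S : ℕ → α) : Prop :=
  ¬ ∃ p L : ℕ, 1 ≤ p ∧ 2 ≤ L ∧ ∀ j < L, S (p + j) = S (p + L - 1 - j)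

/-- The sequence `S^{(w)}` obtained from the 1-indexed sequence `S` by replacing each
symbol `t` by the block `t⁽⁰⁾, t⁽¹⁾, …, t⁽ʷ⁻¹⁾` of `w` new symbols (encoded as pairs). -/
def blowup {α : Type*} (w : ℕ) (S : ℕ → α) : ℕ → α × ℕ :=
  fun p => (S ((p - 1) / w + 1), (p - 1) % w)

/-!
Write `S⁺ = S^{(k+1)}`: position `p` of `S⁺` lies in block `(p - 1) / (k + 1)` of `S` with phase
`(p - 1) % (k + 1)`. A step of size at most `k` changes the block by at most one, and whether it
does is decided by the two phases alone. The two halves of a `k`-bad index sequence carry the same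
phases. At an internal turn this makes exactly one of a descending step and its ascending copy in
the other half change block, which yields a square `t t` in `S`. If the indices descend
throughout, the second half sits a fixed number `c` of blocks below the first, and the blocks
swept by the first half carry a square of period `c`.

Along a path of `T_k` the colour positions first decrease and then increase, with steps of at most
`k` and a turn of less than `k`, so the path or its reverse is a `k`-bad index sequence as soon as
its colours form a repetition. For `S` one takes the first differences of the Thue–Morse sequence,
which are square-free because the Thue–Morse sequence is overlap-free.
-/
def thueMorse (n : ℕ) : ℕ := (Nat.digits 2 n).sum % 2

lemma thueMorse_lt_two (n : ℕ) : thueMorse n < 2 := Nat.mod_lt _ two_pos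

lemma thueMorse_two_mul (n : ℕ) : thueMorse (2 * n) = thueMorse n := by
  rcases Nat.eq_zero_or_pos n with rfl | hn
  · rfl
  · rw [thueMorse, Nat.digits_def' one_lt_two (by omega)]
    simp [thueMorse]

lemma thueMorse_two_mul_add_one (n : ℕ) : thueMorse (2 * n + 1) = 1 - thueMorse n := by
  rw [thueMorse, Nat.digits_def' one_lt_two (by omega), List.sum_cons,
    show (2 * n + 1) % 2 = 1 by omega, show (2 * n + 1) / 2 = n by omega]
  have := thueMorse_lt_two n
  unfold thueMorse at this ⊢
  omega

lemma thueMorse_ne_succ_of_even {i : ℕ} (hi : Even i) : thueMorse i ≠ thueMorse (i + 1) := by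
  obtain ⟨n, rfl⟩ := hi
  rw [← two_mul, thueMorse_two_mul, thueMorse_two_mul_add_one]
  have := thueMorse_lt_two n
  omega

theorem thueMorse_overlapFree {r : ℕ} (hr : 0 < r) (p : ℕ) :
    ¬ ∀ j ≤ r, thueMorse (p + j) = thueMorse (p + j + r) := by
  induction r using Nat.strong_induction_on generalizing p with
  | _ r ih =>
  intro h
  rcases Nat.even_or_odd r with ⟨s, rfl⟩ | hodd
  · obtain ⟨q, hq | hq⟩ := Nat.even_or_odd' p
    · refine ih s (by omega) (by omega) q fun j hj => ?_
      have := h (2 * j) (by omega)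
      rwa [show p + 2 * j = 2 * (q + j) by omega,
        show 2 * (q + j) + (s + s) = 2 * (q + j + s) by omega, thueMorse_two_mul,
        thueMorse_two_mul] at this
    · refine ih s (by omega) (by omega) q fun j hj => ?_
      have := h (2 * j) (by omega)
      rw [show p + 2 * j = 2 * (q + j) + 1 by omega,
        show 2 * (q + j) + 1 + (s + s) = 2 * (q + j + s) + 1 by omega,
        thueMorse_two_mul_add_one, thueMorse_two_mul_add_one] at this
      have := thueMorse_lt_two (q + j)
      have := thueMorse_lt_two (q + j + s)
      omega
  · -- one of `p + j`, `p + j + r` is even, so `thueMorse` alternates along the overlap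
    have halt : ∀ j < r, thueMorse (p + j + 1) = 1 - thueMorse (p + j) := by
      intro j hj
      have hne : thueMorse (p + j) ≠ thueMorse (p + j + 1) := by
        rcases Nat.even_or_odd (p + j) with he | ho
        · exact thueMorse_ne_succ_of_even he
        · rw [h j hj.le, show p + j + 1 = p + (j + 1) by omega, h (j + 1) hj,
            show p + (j + 1) + r = p + j + r + 1 by omega]
          exact thueMorse_ne_succ_of_even (ho.add_odd hodd)
      have := thueMorse_lt_two (p + j)
      have := thueMorse_lt_two (p + j + 1)
      omega
    have hpar : ∀ j ≤ r, thueMorse (p + j) = (thueMorse p + j) % 2 := by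
      intro j hj
      induction j with
      | zero => simp [Nat.mod_eq_of_lt (thueMorse_lt_two p)]
      | succ j ihj =>
        rw [← add_assoc, halt j hj, ihj (by omega)]
        omega
    have := h 0 (Nat.zero_le r)
    rw [add_zero, hpar r le_rfl] at this
    obtain ⟨s, rfl⟩ := hodd
    have := thueMorse_lt_two p
    omega

def thueMorseDiff (n : ℕ) : ℕ := thueMorse (n + 1) + 1 - thueMorse n

lemma thueMorseDiff_lt_three (n : ℕ) : thueMorseDiff n < 3 := by
  have := thueMorse_lt_two n
  have := thueMorse_lt_two (n + 1)
  unfold thueMorseDiff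
  omega

theorem seqSquareFree_thueMorseDiff : SeqSquareFree thueMorseDiff := by
  rintro ⟨p, r, -, hr, hsq⟩
  have hb := thueMorse_lt_two
  have htel : ∀ j ≤ r,
      thueMorse (p + j) + thueMorse (p + r) = thueMorse (p + r + j) + thueMorse p := by
    intro j hj
    induction j with
    | zero => simp [add_comm]
    | succ j ihj =>
      have := hsq j hj
      unfold thueMorseDiff at this
      have := ihj (by omega)
      have := hb (p + j); have := hb (p + j + 1); have := hb (p + r + j)
      have := hb (p + r + j + 1); have := hb p; have := hb (p + r)
      rw [← add_assoc, ← add_assoc]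
      omega
  have h0 : thueMorse (p + r) = thueMorse p := by
    have := htel r le_rfl
    have := hb (p + r + r); have := hb p; have := hb (p + r)
    omega
  refine thueMorse_overlapFree hr p fun j hj => ?_
  have := htel j hj
  rw [add_right_comm]
  omega

lemma div_mod_cases_of_lt_of_lt_add {w x y : ℕ} (hxy : x < y) (hyx : y < x + w) :
    (y / w = x / w ∧ x % w < y % w) ∨ (y / w = x / w + 1 ∧ y % w < x % w) := by
  have hw : 0 < w := by omega
  have hx := Nat.div_add_mod x w
  have hy := Nat.div_add_mod y w
  have := Nat.mod_lt x hw
  have := Nat.mod_lt y hw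
  have hle : x / w ≤ y / w := Nat.div_le_div_right hxy.le
  have hle' : y / w ≤ x / w + 1 :=
    (Nat.div_le_div_right hyx.le).trans (Nat.add_div_right x hw).le
  rcases (by omega : y / w = x / w ∨ y / w = x / w + 1) with h | h
  · rw [h] at hy
    omega
  · rw [h, Nat.mul_succ] at hy
    omega

lemma div_lt_div_of_lt_of_mod_eq {w x y : ℕ} (hxy : x < y) (hmod : x % w = y % w) :
    x / w < y / w := by
  by_contra! h
  have := Nat.mul_le_mul_left w h
  have := Nat.div_add_mod x w
  have := Nat.div_add_mod y w
  omega

lemma exists_eq_of_le_add_one {f : ℕ → ℕ} {a b v : ℕ} (hab : a ≤ b)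
    (hf : ∀ n, a ≤ n → n < b → f n ≤ f (n + 1) + 1) (hb : f b ≤ v) (ha : v ≤ f a) :
    ∃ n, a ≤ n ∧ n ≤ b ∧ f n = v := by
  induction b, hab using Nat.le_induction with
  | base => exact ⟨a, le_rfl, le_rfl, by omega⟩
  | succ b hab ih =>
    by_cases hv : f b ≤ v
    · obtain ⟨n, h1, h2, h3⟩ := ih (fun n h1 h2 => hf n h1 (by omega)) hv
      exact ⟨n, h1, by omega, h3⟩
    · exact ⟨b + 1, by omega, le_rfl, by have := hf b hab (by omega); omega⟩

namespace SeqSquareFree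

variable {α : Type*} {S : ℕ → α}

lemma apply_ne_apply_add_one (hS : SeqSquareFree S) {p : ℕ} (hp : 1 ≤ p) : S p ≠ S (p + 1) :=
  fun h => hS ⟨p, 1, hp, le_rfl, fun j hj => by rwa [Nat.lt_one_iff.mp hj]⟩

lemma false_of_translate (hS : SeqSquareFree S) {B : ℕ → ℕ} {r c : ℕ} (hr : 1 ≤ r)
    (hc : 1 ≤ c) (hstep : ∀ j, 1 ≤ j → j ≤ r → B j ≤ B (j + 1) + 1)
    (hshift : ∀ j, 1 ≤ j → j ≤ r → B (j + r) + c = B j)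
    (hrep : ∀ j, 1 ≤ j → j ≤ r → S (B j + 1) = S (B (j + r) + 1)) : False := by
  have hcover : ∀ v, B (1 + r) + 1 ≤ v → v ≤ B 1 → ∃ j, 1 ≤ j ∧ j ≤ r ∧ B j = v := by
    intro v hv hv'
    have : B r ≤ B (1 + r) + 1 := add_comm r 1 ▸ hstep r hr le_rfl
    exact exists_eq_of_le_add_one hr (fun n h1 h2 => hstep n h1 h2.le) (by omega) hv'
  have h1 := hshift 1 le_rfl hr
  obtain ⟨j₀, hj₀, hj₀r, hBj₀⟩ := hcover (B (1 + r) + 1) le_rfl (by omega)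
  have := hshift j₀ hj₀ hj₀r
  refine hS ⟨B (1 + r) + 2 - c, c, by omega, hc, fun t ht => ?_⟩
  obtain ⟨j, hj, hjr, hBj⟩ := hcover (B (1 + r) + 1 + t) (by omega) (by omega)
  have := hshift j hj hjr
  rw [show B (1 + r) + 2 - c + t = B (j + r) + 1 by omega,
    show B (1 + r) + 2 - c + c + t = B j + 1 by omega, hrep j hj hjr]

variable {k : ℕ}

lemma false_of_blowup_turn (hS : SeqSquareFree S) {x₁ x₂ y₁ y₂ : ℕ} (hx₂ : 1 ≤ x₂)
    (hx : x₂ < x₁) (hx' : x₁ ≤ x₂ + k) (hy₁ : 1 ≤ y₁) (hy : y₁ < y₂) (hy' : y₂ ≤ y₁ + k)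
    (h₁ : blowup (k + 1) S x₁ = blowup (k + 1) S y₁)
    (h₂ : blowup (k + 1) S x₂ = blowup (k + 1) S y₂) : False := by
  simp only [blowup, Prod.mk.injEq] at h₁ h₂
  obtain ⟨hS₁, hφ₁⟩ := h₁
  obtain ⟨hS₂, hφ₂⟩ := h₂
  -- the phases force exactly one of the two steps to change block
  rcases div_mod_cases_of_lt_of_lt_add (w := k + 1) (x := x₂ - 1) (y := x₁ - 1)
    (by omega) (by omega) with ⟨hbx, hφx⟩ | ⟨hbx, hφx⟩ <;>
  rcases div_mod_cases_of_lt_of_lt_add (w := k + 1) (x := y₁ - 1) (y := y₂ - 1)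
    (by omega) (by omega) with ⟨hby, hφy⟩ | ⟨hby, hφy⟩
  · omega
  · refine hS.apply_ne_apply_add_one (p := (y₁ - 1) / (k + 1) + 1) le_add_self ?_
    rw [← hS₁, hbx, hS₂, hby]
  · refine hS.apply_ne_apply_add_one (p := (x₂ - 1) / (k + 1) + 1) le_add_self ?_
    rw [hS₂, hby, ← hS₁, hbx]
  · omega

lemma false_of_blowup_strictAnti (hS : SeqSquareFree S) {r : ℕ} {i : ℕ → ℕ} (hr : 1 ≤ r)
    (hpos : ∀ j, 1 ≤ j → j ≤ 2 * r → 1 ≤ i j)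
    (hdec : ∀ j, 1 ≤ j → j < 2 * r → i (j + 1) < i j ∧ i j ≤ i (j + 1) + k)
    (hrep : ∀ j, 1 ≤ j → j ≤ r → blowup (k + 1) S (i j) = blowup (k + 1) S (i (j + r))) :
    False := by
  obtain ⟨B, hB⟩ : ∃ B : ℕ → ℕ, ∀ j, B j = (i j - 1) / (k + 1) := ⟨_, fun _ => rfl⟩
  obtain ⟨φ, hφ⟩ : ∃ φ : ℕ → ℕ, ∀ j, φ j = (i j - 1) % (k + 1) := ⟨_, fun _ => rfl⟩
  have hstep : ∀ j, 1 ≤ j → j < 2 * r →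
      (B j = B (j + 1) ∧ φ (j + 1) < φ j) ∨ (B j = B (j + 1) + 1 ∧ φ j < φ (j + 1)) := by
    intro j h1 h2
    have := hdec j h1 h2
    have := hpos (j + 1) (by omega) (by omega)
    simp only [hB, hφ]
    exact div_mod_cases_of_lt_of_lt_add (by omega) (by omega)
  have hrep' : ∀ j, 1 ≤ j → j ≤ r → S (B j + 1) = S (B (j + r) + 1) ∧ φ j = φ (j + r) := by
    intro j h1 h2
    simpa only [hB, hφ, blowup, Prod.mk.injEq] using hrep j h1 h2
  have hanti : StrictAntiOn i (Set.Icc 1 (2 * r)) :=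
    strictAntiOn_of_add_one_lt Set.ordConnected_Icc fun j _ hj hj' => (hdec j hj.1 (by
      simp only [Set.mem_Icc] at hj'; omega)).1
  have hlt : B (1 + r) < B 1 := by
    have := hanti ⟨le_rfl, by omega⟩ ⟨by omega, by omega⟩ (by omega : 1 < 1 + r)
    have := hpos (1 + r) (by omega) (by omega)
    rw [hB, hB]
    exact div_lt_div_of_lt_of_mod_eq (by omega) (by rw [← hφ, ← hφ, (hrep' 1 le_rfl hr).2])
  obtain ⟨c, hc⟩ := Nat.exists_eq_add_of_lt hlt
  -- a step of the first half and the matching step of the second half read the same phases,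
  -- hence change block alike
  have hshift : ∀ j, 1 ≤ j → j ≤ r → B (j + r) + (c + 1) = B j := by
    intro j hj hjr
    induction j, hj using Nat.le_induction with
    | base => omega
    | succ j hj ih =>
      have := ih (by omega)
      have := hstep j hj (by omega)
      have := hstep (j + r) (by omega) (by omega)
      have := (hrep' j hj (by omega)).2
      have hφ' := (hrep' (j + 1) (by omega) hjr).2
      rw [show j + 1 + r = j + r + 1 by omega] at hφ' ⊢
      omega
  exact hS.false_of_translate hr le_add_self
    (fun j h1 h2 => by rcases hstep j h1 (by omega) with h | h <;> omega) hshift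
    (fun j h1 h2 => (hrep' j h1 h2).1)

theorem kSpecialInf_blowup (hS : SeqSquareFree S) (k : ℕ) : KSpecialInf k (blowup (k + 1) S) := by
  rintro ⟨r, m, i, ⟨hr, hm, hm2r, hrep, hdec, hinc, hgap, -⟩, hpos⟩
  rcases hm2r.lt_or_eq with hlt | rfl
  · -- a descending step `j → j + 1` whose copy `j + r → j + r + 1` ascends
    obtain ⟨j, hj, hjm, hmj, hjr⟩ : ∃ j, 1 ≤ j ∧ j < m ∧ m ≤ j + r ∧ j + 1 ≤ r :=
      if h : m ≤ r then ⟨m - 1, by omega⟩ else ⟨m - r, by omega⟩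
    refine hS.false_of_blowup_turn (hpos (j + 1) (by omega) (by omega)) (hdec j hj hjm)
      (hgap j hj (by omega)).2 (hpos (j + r) (by omega) (by omega)) (hinc (j + r) hmj (by omega))
      (hgap (j + r) (by omega) (by omega)).1 (hrep j hj (by omega)) ?_
    rw [hrep (j + 1) (by omega) hjr, add_right_comm]
  · exact hS.false_of_blowup_strictAnti hr hpos
      (fun j h1 h2 => ⟨hdec j h1 h2, (hgap j h1 h2).2⟩) hrep

end SeqSquareFree

section Valley

/-- The colour positions `a 0, …, a (L - 1)` along a path in `kTree k` that first climbs `t₀`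
edges towards the root and then descends. -/
structure PathShape (k L t₀ : ℕ) (a : ℕ → ℕ) : Prop where
  le_length : t₀ ≤ L
  step_le : ∀ t, t + 1 < L → a (t + 1) ≤ a t + k ∧ a t ≤ a (t + 1) + k
  anti : ∀ t, t + 1 < t₀ → a (t + 1) < a t
  mono : ∀ t, t₀ ≤ t → t + 1 < L → a t < a (t + 1)
  apex : 0 < t₀ → t₀ < L → a (t₀ - 1) ≠ a t₀ ∧ a t₀ < a (t₀ - 1) + k ∧ a (t₀ - 1) < a t₀ + k

/-- The conditions (b)–(d) of `KBadIdx`, shifted to start at index `0`. -/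
structure IsValley (k L m : ℕ) (a : ℕ → ℕ) : Prop where
  one_lt : 1 < m
  le_length : m ≤ L
  step_le : ∀ t, t + 1 < L → a (t + 1) ≤ a t + k ∧ a t ≤ a (t + 1) + k
  anti : ∀ t, t + 1 < m → a (t + 1) < a t
  mono : ∀ t, m ≤ t + 1 → t + 1 < L → a t < a (t + 1)
  turn : m < L → a m < a (m - 1) + k

variable {k L t₀ : ℕ} {a : ℕ → ℕ}

namespace PathShape

lemma of_depth {e : ℕ → ℕ} (ht₀ : t₀ ≤ L)
    (hup : ∀ t < t₀, e (t + 1) < e t ∧ e t ≤ e (t + 1) + k)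
    (hdown : ∀ t, t₀ ≤ t → t < L → e t < e (t + 1) ∧ e (t + 1) ≤ e t + k)
    (hapex : 0 < t₀ → t₀ < L → e (t₀ - 1) ≠ e (t₀ + 1)) :
    PathShape k L t₀ (fun t => max (e t) (e (t + 1))) where
  le_length := ht₀
  step_le t ht := by
    rcases lt_trichotomy (t + 1) t₀ with h | rfl | h
    · have := hup t (by omega); have := hup (t + 1) h; omega
    · have := hup t (by omega); have := hdown (t + 1) le_rfl ht; omega
    · have := hdown t (by omega) (by omega); have := hdown (t + 1) (by omega) ht; omega
  anti t ht := by
    have := hup t (by omega); have := hup (t + 1) ht; omega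
  mono t ht ht' := by
    have := hdown t ht (by omega); have := hdown (t + 1) (by omega) ht'; omega
  apex h0 hL := by
    obtain ⟨s, rfl⟩ : ∃ s, t₀ = s + 1 := ⟨t₀ - 1, by omega⟩
    have := hup s (by omega); have := hdown (s + 1) le_rfl hL
    have hne := hapex h0 hL
    simp only [Nat.add_sub_cancel] at hne ⊢
    omega

lemma reverse (h : PathShape k L t₀ a) : PathShape k L (L - t₀) (fun t => a (L - 1 - t)) where
  le_length := Nat.sub_le L t₀
  step_le t ht := by
    have := h.step_le (L - 2 - t) (by omega)
    rw [show L - 2 - t + 1 = L - 1 - t by omega] at this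
    rw [show L - 1 - (t + 1) = L - 2 - t by omega]
    omega
  anti t ht := by
    have := h.mono (L - 2 - t) (by omega) (by omega)
    rwa [show L - 2 - t + 1 = L - 1 - t by omega, ← show L - 1 - (t + 1) = L - 2 - t by omega]
      at this
  mono t ht ht' := by
    have := h.anti (L - 2 - t) (by omega)
    rwa [show L - 2 - t + 1 = L - 1 - t by omega, ← show L - 1 - (t + 1) = L - 2 - t by omega]
      at this
  apex h0 hL := by
    have := h.apex (by omega) (by omega)
    rw [show L - 1 - (L - t₀ - 1) = t₀ by omega, show L - 1 - (L - t₀) = t₀ - 1 by omega]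
    omega

lemma isValley (h : PathShape k L t₀ a) (ht₀ : 2 ≤ t₀) (hasc : t₀ < L → a (t₀ - 1) < a t₀) :
    IsValley k L t₀ a where
  one_lt := ht₀
  le_length := h.le_length
  step_le := h.step_le
  anti := h.anti
  mono t ht ht' := by
    rcases ht.lt_or_eq with ht | ht
    · exact h.mono t (by omega) ht'
    · have := hasc (by omega)
      rwa [show t₀ - 1 = t by omega, ht] at this
  turn hL := (h.apex (by omega) hL).2.1

lemma extend (h : PathShape k L t₀ a) (hL : t₀ + 1 = L) (h0 : 0 < t₀)
    (hdesc : a t₀ < a (t₀ - 1)) : PathShape k L L a where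
  le_length := le_rfl
  step_le := h.step_le
  anti t ht := by
    rcases Nat.lt_or_ge (t + 1) t₀ with ht' | ht'
    · exact h.anti t ht'
    · rwa [show t = t₀ - 1 by omega, Nat.sub_add_cancel h0]
  mono t ht ht' := by omega
  apex _ hL' := by omega

lemma exists_isValley (h : PathShape k L t₀ a) (hL : 2 ≤ L) :
    ∃ m, IsValley k L m a ∨ IsValley k L m (fun t => a (L - 1 - t)) := by
  have hvalley : ∀ {t₀ : ℕ} {b : ℕ → ℕ}, PathShape k L t₀ b →
      (t₀ = L ∨ (t₀ + 1 = L ∧ 0 < t₀ ∧ b t₀ < b (t₀ - 1)) ∨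
        (2 ≤ t₀ ∧ t₀ < L ∧ b (t₀ - 1) < b t₀)) → ∃ m, IsValley k L m b := by
    intro t₀ b h hcase
    rcases hcase with rfl | ⟨hL', h0, hdesc⟩ | ⟨ht₀, -, hasc⟩
    · exact ⟨t₀, h.isValley hL (by omega)⟩
    · exact ⟨L, (h.extend hL' h0 hdesc).isValley hL (by omega)⟩
    · exact ⟨t₀, h.isValley ht₀ fun _ => hasc⟩
  by_cases hcase : t₀ = L ∨ (t₀ + 1 = L ∧ 0 < t₀ ∧ a t₀ < a (t₀ - 1)) ∨
      (2 ≤ t₀ ∧ t₀ < L ∧ a (t₀ - 1) < a t₀)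
  · exact (hvalley h hcase).imp fun _ => Or.inl
  · refine (hvalley h.reverse ?_).imp fun _ => Or.inr
    have := h.le_length
    have := h.apex
    simp only [show L - 1 - (L - t₀ - 1) = t₀ by omega, show L - 1 - (L - t₀) = t₀ - 1 by omega]
    omega

end PathShape

lemma IsValley.not_kSpecialInf {α : Type*} {S : ℕ → α} {r m : ℕ} (h : IsValley k (2 * r) m a)
    (hr : 1 ≤ r) (hrep : ∀ t < r, S (a t) = S (a (t + r))) (hpos : ∀ t < 2 * r, 1 ≤ a t) :
    ¬ KSpecialInf k S := by
  have := h.one_lt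
  refine fun hS => hS ⟨r, m, fun j => a (j - 1), ⟨hr, h.one_lt, h.le_length, ?_, ?_, ?_, ?_, ?_⟩,
    fun j h1 h2 => hpos (j - 1) (by omega)⟩
  · rintro (_ | t) h1 h2
    · omega
    · simpa [Nat.add_right_comm t 1 r] using hrep t (by omega)
  · rintro (_ | t) h1 h2
    · omega
    · simpa using h.anti t (by omega)
  · rintro (_ | t) h1 h2
    · omega
    · simpa using h.mono t (by omega) (by omega)
  · rintro (_ | t) h1 h2
    · omega
    · simpa using h.step_le t (by omega)
  · simpa using h.turn

end Valley

section KTree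

open SimpleGraph

variable {k : ℕ}

lemma kTree_adj_cases {u v : List (Fin k)} (h : (kTree k).Adj u v) :
    (∃ j, u = j :: v) ∨ ∃ j, v = j :: u :=
  ((fromRel_adj _ u v).mp h).2

lemma edgeIdx_cons (j : Fin k) (v : List (Fin k)) : edgeIdx (j :: v) = edgeIdx v + j + 1 := rfl

lemma one_le_max_edgeIdx {u v : List (Fin k)} (h : (kTree k).Adj u v) :
    1 ≤ max (edgeIdx u) (edgeIdx v) := by
  rcases kTree_adj_cases h with ⟨j, rfl⟩ | ⟨j, rfl⟩ <;> simp [edgeIdx_cons]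

lemma derivedColoring_of_adj (S : ℕ → ℕ) {u v : List (Fin k)} (h : (kTree k).Adj u v) :
    derivedColoring k S s(u, v) = S (max (edgeIdx u) (edgeIdx v)) := by
  rcases kTree_adj_cases h with ⟨j, rfl⟩ | ⟨j, rfl⟩ <;>
    simp [derivedColoring, edgeIdx_cons] <;> congr 1 <;> omega

lemma exists_up_down {L : ℕ} {v : ℕ → List (Fin k)}
    (hadj : ∀ t < L, (kTree k).Adj (v t) (v (t + 1))) (hnb : ∀ t, t + 2 ≤ L → v t ≠ v (t + 2)) :
    ∃ t₀ ≤ L, (∀ t < t₀, ∃ j, v t = j :: v (t + 1)) ∧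
      ∀ t, t₀ ≤ t → t < L → ∃ j, v (t + 1) = j :: v t := by
  induction L with
  | zero => exact ⟨0, le_rfl, by simp, by omega⟩
  | succ L ih =>
    obtain ⟨t₀, ht₀, hup, hdown⟩ :=
      ih (fun t ht => hadj t (by omega)) (fun t ht => hnb t (by omega))
    rcases kTree_adj_cases (hadj L (by omega)) with hL | hL
    · obtain rfl | ht₀ := ht₀.eq_or_lt
      · exact ⟨t₀ + 1, le_rfl, fun t ht => if h : t < t₀ then hup t h else by
          rwa [show t = t₀ by omega], by omega⟩
      · obtain ⟨j, hj⟩ := hdown (L - 1) (by omega) (by omega)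
        obtain ⟨j', hj'⟩ := hL
        rw [Nat.sub_add_cancel (by omega), hj'] at hj
        have hne := hnb (L - 1) (by omega)
        rw [show L - 1 + 2 = L + 1 by omega] at hne
        exact absurd (List.cons.inj hj).2.symm hne
    · exact ⟨t₀, by omega, hup, fun t h1 h2 => if h : t < L then hdown t h1 h else by
        rwa [show t = L by omega]⟩

lemma exists_pathShape {L : ℕ} {v : ℕ → List (Fin k)}
    (hadj : ∀ t < L, (kTree k).Adj (v t) (v (t + 1))) (hnb : ∀ t, t + 2 ≤ L → v t ≠ v (t + 2)) :
    ∃ t₀, PathShape k L t₀ (fun t => max (edgeIdx (v t)) (edgeIdx (v (t + 1)))) := by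
  obtain ⟨t₀, ht₀, hup, hdown⟩ := exists_up_down hadj hnb
  refine ⟨t₀, PathShape.of_depth ht₀ (fun t ht => ?_) (fun t h1 h2 => ?_) (fun h0 hL => ?_)⟩
  · obtain ⟨j, hj⟩ := hup t ht
    rw [hj, edgeIdx_cons]
    omega
  · obtain ⟨j, hj⟩ := hdown t h1 h2
    rw [hj, edgeIdx_cons]
    omega
  · obtain ⟨j, hj⟩ := hup (t₀ - 1) (by omega)
    obtain ⟨j', hj'⟩ := hdown t₀ le_rfl hL
    rw [Nat.sub_add_cancel h0] at hj
    have hne := hnb (t₀ - 1) (by omega)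
    rw [show t₀ - 1 + 2 = t₀ + 1 by omega, hj, hj'] at hne
    rw [hj, hj', edgeIdx_cons, edgeIdx_cons]
    exact fun h => hne (by rw [Fin.ext (by omega : (j : ℕ) = j')])

lemma IsRepetition.exists_getElem?_add {α : Type*} {l : List α} (h : IsRepetition l) :
    ∃ r, 1 ≤ r ∧ l.length = 2 * r ∧ ∀ t < r, l[t]? = l[t + r]? := by
  obtain ⟨w, hw, rfl⟩ := h
  refine ⟨w.length, List.length_pos_iff.mpr hw, by simp [two_mul], fun t ht => ?_⟩
  rw [List.getElem?_append_left ht, List.getElem?_append_right (by omega), Nat.add_sub_cancel]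

theorem nonrepEdgeColoring_derivedColoring {S : ℕ → ℕ} (hS : KSpecialInf k S) :
    NonrepEdgeColoring (kTree k) (derivedColoring k S) := by
  intro u v p hp hrep
  obtain ⟨r, hr, hlen, hsq⟩ := hrep.exists_getElem?_add
  have hL : p.length = 2 * r := by simpa using hlen
  set a := fun t => max (edgeIdx (p.getVert t)) (edgeIdx (p.getVert (t + 1)))
  have hcol : ∀ t < p.length, (p.edges.map (derivedColoring k S))[t]? = some (S (a t)) := by
    intro t ht
    rw [List.getElem?_map, List.getElem?_eq_getElem (by simpa using ht), Walk.getElem_edges,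
      Option.map_some, derivedColoring_of_adj S (p.adj_getVert_succ ht)]
  have hrep : ∀ t < r, S (a t) = S (a (t + r)) := fun t ht => by
    simpa [hcol t (by omega), hcol (t + r) (by omega)] using hsq t ht
  have hpos : ∀ t < 2 * r, 1 ≤ a t := fun t ht =>
    one_le_max_edgeIdx (p.adj_getVert_succ (by omega))
  obtain ⟨t₀, hshape⟩ := exists_pathShape (v := p.getVert) (fun t ht => p.adj_getVert_succ ht)
    fun t ht h => by simpa using hp.getVert_injOn (by simp; omega) (by simp; omega) h
  rw [hL] at hshape
  obtain ⟨m, hm | hm⟩ := hshape.exists_isValley (by omega)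
  · exact hm.not_kSpecialInf hr hrep hpos hS
  · refine hm.not_kSpecialInf hr (fun t ht => ?_) (fun t ht => hpos _ (by omega)) hS
    rw [show 2 * r - 1 - (t + r) = r - 1 - t by omega, hrep (r - 1 - t) (by omega),
      show r - 1 - t + r = 2 * r - 1 - t by omega]

end KTree

lemma KSpecialInf.comp {α β : Type*} {k : ℕ} {S : ℕ → α} {f : α → β} (hS : KSpecialInf k S)
    (hf : Set.InjOn f (Set.range S)) : KSpecialInf k (f ∘ S) := by
  rintro ⟨r, m, i, ⟨hr, hm, hm', hrep, hbad⟩, hpos⟩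
  exact hS ⟨r, m, i, ⟨hr, hm, hm', fun j h1 h2 => hf ⟨_, rfl⟩ ⟨_, rfl⟩ (hrep j h1 h2), hbad⟩, hpos⟩

theorem thueIdx_kTree_le {k n : ℕ} {S : ℕ → ℕ} (hS : KSpecialInf k S)
    (hn : ∀ i, 1 ≤ i → S i < n) : thueIdx (kTree k) ≤ n := by
  refine Nat.sInf_le ⟨derivedColoring k S, fun e he => ?_, nonrepEdgeColoring_derivedColoring hS⟩
  induction e using Sym2.ind with
  | _ u v =>
    rw [derivedColoring_of_adj S he]
    exact hn _ (one_le_max_edgeIdx he)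

theorem stmt15_general (k : ℕ) :
    (∀ S : ℕ → ℕ, (∀ i, 1 ≤ i → S i < 3) → SeqSquareFree S →
      KSpecialInf k (blowup (k + 1) S)) ∧
    thueIdx (kTree k) ≤ 3 * k + 3 := by
  refine ⟨fun S _ hS => hS.kSpecialInf_blowup k, ?_⟩
  have hinj : Set.InjOn (fun x : ℕ × ℕ => x.1 + 3 * x.2)
      (Set.range (blowup (k + 1) thueMorseDiff)) := by
    rintro _ ⟨p, rfl⟩ _ ⟨q, rfl⟩ h
    have := thueMorseDiff_lt_three ((p - 1) / (k + 1) + 1)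
    have := thueMorseDiff_lt_three ((q - 1) / (k + 1) + 1)
    simp only [blowup, Prod.mk.injEq] at h ⊢
    omega
  refine thueIdx_kTree_le ((seqSquareFree_thueMorseDiff.kSpecialInf_blowup k).comp hinj)
    fun p _ => ?_
  have := thueMorseDiff_lt_three ((p - 1) / (k + 1) + 1)
  have := Nat.mod_lt (p - 1) (by omega : 0 < k + 1)
  simp only [Function.comp, blowup]
  omega

/-- For every `k ≥ 1`, if `S` is an infinite square-free sequence over 3 symbols, then
`S⁺ = S^{(k+1)}` over `3(k+1)` symbols is `k`-special; consequently `π'(T_k) ≤ 3k + 3`. -/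
theorem stmt15 (k : ℕ) (hk : 1 ≤ k) :
    (∀ S : ℕ → ℕ, (∀ i, 1 ≤ i → S i < 3) → SeqSquareFree S →
      KSpecialInf k (blowup (k + 1) S)) ∧
    thueIdx (kTree k) ≤ 3 * k + 3 :=
  stmt15_general k
end

section
/- Let S be an infinite square-free sequence over {a, b, c} containing neither aba nor bab as a factor. Form S' by replacing each occurrence of c with the block c^{(0)}, c^{(1)}, ..., c^{(k)} (k+1 symbols) and each occurrence of a (resp. b) with the block a^{(1)},...,a^{(k)} (resp. b^{(1)},...,b^{(k)}). Then S' is a k-special sequence over 3k + 1 symbols. -/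
/-!
Positions of `S'` fall into blocks, one per letter of `S`, and a label of `S'` records the
letter together with the position inside its block. Hence equal labels lie in blocks at least
two apart, and at least `2k + 1` positions apart, since two consecutive blocks of width `k`
between them would spell `aba` or `bab`. As a bad index sequence moves by at most `k` per step,
one of its halves then lies entirely above the other; up to reversal it is the second.

Passing to blocks, a step of the rising arm preserves the block shift between the two halves,
while a step of the falling arm increases it. Along the rising arm `S` is therefore periodic
with the final shift. If the sequence turns at its first index, this periodicity yields a square
in `S`; otherwise the step into the turn forces two equal adjacent letters, `aba` or `bab`.
-/

lemma exists_eq_of_le_add_one_s17 {f : ℕ → ℕ} {a c : ℕ} (hac : a ≤ c)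
    (hf : ∀ j, a ≤ j → j < c → f (j + 1) ≤ f j + 1) {x : ℕ} (hx₁ : f a ≤ x) (hx₂ : x ≤ f c) :
    ∃ j, a ≤ j ∧ j ≤ c ∧ f j = x := by
  induction c, hac using Nat.le_induction with
  | base => exact ⟨a, le_rfl, le_rfl, by omega⟩
  | succ c hac ih =>
    by_cases hxc : x ≤ f c
    · obtain ⟨j, hj₁, hj₂, hj⟩ := ih (fun j h₁ h₂ => hf j h₁ (by omega)) hxc
      exact ⟨j, hj₁, by omega, hj⟩
    · exact ⟨c + 1, by omega, le_rfl, by have := hf c hac (by omega); omega⟩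

lemma iff_one_of_iff_succ {P : ℕ → Prop} {r : ℕ}
    (hP : ∀ j, 1 ≤ j → j < r → (P j ↔ P (j + 1))) :
    ∀ j, 1 ≤ j → j ≤ r → (P j ↔ P 1) := by
  intro j hj
  induction j, hj using Nat.le_induction with
  | base => exact fun _ => Iff.rfl
  | succ j hj ih => exact fun hjr => (hP j hj (by omega)).symm.trans (ih (by omega))

/-- Block `n ≥ 1` consists of the positions `p` with `len (n - 1) < p ≤ len n`. -/
noncomputable def blockOf (len : ℕ → ℕ) (p : ℕ) : ℕ := sInf {m | p ≤ len m}

noncomputable def offset (len : ℕ → ℕ) (p : ℕ) : ℕ := p - len (blockOf len p - 1)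

structure IsBlockEnds (k : ℕ) (len : ℕ → ℕ) : Prop where
  one_le : 1 ≤ k
  zero : len 0 = 0
  add_le : ∀ m, len m + k ≤ len (m + 1)

namespace IsBlockEnds

variable {k : ℕ} {len : ℕ → ℕ} {m p q : ℕ}

lemma strictMono (h : IsBlockEnds k len) : StrictMono len :=
  strictMono_nat_of_lt_succ fun m => by have := h.add_le m; have := h.one_le; omega

lemma blockOf_spec (h : IsBlockEnds k len) (hp : 1 ≤ p) :
    1 ≤ blockOf len p ∧ len (blockOf len p - 1) < p ∧ p ≤ len (blockOf len p) := by
  have hmem : p ≤ len (blockOf len p) :=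
    Nat.sInf_mem (s := {m | p ≤ len m}) ⟨p, h.strictMono.id_le p⟩
  have hpos : 1 ≤ blockOf len p := by
    by_contra h0
    rw [show blockOf len p = 0 by omega, h.zero] at hmem
    omega
  have hprev : blockOf len p - 1 ∉ {m | p ≤ len m} :=
    Nat.notMem_of_lt_sInf (show blockOf len p - 1 < blockOf len p by omega)
  exact ⟨hpos, not_le.mp hprev, hmem⟩

lemma blockOf_eq (h : IsBlockEnds k len) (h1 : len m < p) (h2 : p ≤ len (m + 1)) :
    blockOf len p = m + 1 :=
  (Nat.sInf_upward_closed_eq_succ_iff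
    (fun _ _ hle hmem => hmem.trans (h.strictMono.monotone hle)) m).mpr ⟨h2, not_le.mpr h1⟩

lemma offset_add (h : IsBlockEnds k len) (hp : 1 ≤ p) :
    offset len p + len (blockOf len p - 1) = p := by
  have := (h.blockOf_spec hp).2.1
  unfold offset
  omega

lemma one_le_offset (h : IsBlockEnds k len) (hp : 1 ≤ p) : 1 ≤ offset len p := by
  have := (h.blockOf_spec hp).2.1
  unfold offset
  omega

lemma blockOf_of_lt_of_le_add (h : IsBlockEnds k len) (hp : 1 ≤ p) (hpq : p < q)
    (hqk : q ≤ p + k) :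
    blockOf len q = if offset len p < offset len q then blockOf len p else blockOf len p + 1 := by
  have hoff := h.offset_add hp
  have hoff' := h.offset_add (p := q) (by omega)
  obtain ⟨hn, hlo, hhi⟩ := h.blockOf_spec hp
  obtain ⟨m, hm⟩ : ∃ m, blockOf len p = m + 1 := ⟨_, (Nat.sub_add_cancel hn).symm⟩
  rw [hm, Nat.add_sub_cancel] at hoff hlo
  rw [hm] at hhi ⊢
  by_cases hq : q ≤ len (m + 1)
  · rw [h.blockOf_eq (by omega) hq] at hoff' ⊢
    rw [Nat.add_sub_cancel] at hoff'
    rw [if_pos (by omega)]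
  · have := h.add_le m
    have := h.add_le (m + 1)
    rw [h.blockOf_eq (m := m + 1) (by omega) (by omega)] at hoff' ⊢
    rw [Nat.add_sub_cancel] at hoff'
    rw [if_neg (by omega)]

end IsBlockEnds

namespace SeqSquareFree

variable {α : Type*} {S : ℕ → α} {x : ℕ}

lemma apply_ne_apply_succ (h : SeqSquareFree S) (hx : 1 ≤ x) : S x ≠ S (x + 1) :=
  fun he => h ⟨x, 1, hx, le_rfl, fun j hj => by simpa [Nat.lt_one_iff.mp hj] using he⟩

lemma apply_add_two_ne {S : ℕ → Fin 3} (h : SeqSquareFree S)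
    (haba : ∀ p, 1 ≤ p → ¬ (S p = 0 ∧ S (p + 1) = 1 ∧ S (p + 2) = 0))
    (hbab : ∀ p, 1 ≤ p → ¬ (S p = 1 ∧ S (p + 1) = 0 ∧ S (p + 2) = 1))
    (hx : 1 ≤ x) (h0 : S x ≠ 2) (h1 : S (x + 1) ≠ 2) : S (x + 2) ≠ S x := by
  have hne := h.apply_ne_apply_succ hx
  have ha := haba x hx
  have hb := hbab x hx
  generalize S x = u at *
  generalize S (x + 1) = v at *
  generalize S (x + 2) = w at *
  revert u v w
  decide

end SeqSquareFree

structure IsBlockSubstitution (k : ℕ) (S : ℕ → Fin 3) (len : ℕ → ℕ) (S' : ℕ → Fin 3 × ℕ) :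
    Prop where
  one_le : 1 ≤ k
  len_zero : len 0 = 0
  len_succ : ∀ m, len (m + 1) = len m + (if S (m + 1) = 2 then k + 1 else k)
  apply_eq : ∀ m p, len m < p → p ≤ len (m + 1) →
    S' p = (S (m + 1), if S (m + 1) = 2 then p - len m - 1 else p - len m)

namespace IsBlockSubstitution

variable {k : ℕ} {S : ℕ → Fin 3} {len : ℕ → ℕ} {S' : ℕ → Fin 3 × ℕ} {p q : ℕ}

lemma isBlockEnds (h : IsBlockSubstitution k S len S') : IsBlockEnds k len :=
  ⟨h.one_le, h.len_zero, fun m => by rw [h.len_succ m]; split_ifs <;> omega⟩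

lemma len_blockOf (h : IsBlockSubstitution k S len S') (hp : 1 ≤ p) :
    len (blockOf len p) =
      len (blockOf len p - 1) + if S (blockOf len p) = 2 then k + 1 else k := by
  obtain ⟨hn, -⟩ := h.isBlockEnds.blockOf_spec hp
  simpa [Nat.sub_add_cancel hn] using h.len_succ (blockOf len p - 1)

lemma apply_eq_blockOf (h : IsBlockSubstitution k S len S') (hp : 1 ≤ p) :
    S' p = (S (blockOf len p),
      if S (blockOf len p) = 2 then offset len p - 1 else offset len p) := by
  obtain ⟨hn, hlo, hhi⟩ := h.isBlockEnds.blockOf_spec hp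
  have := h.apply_eq (blockOf len p - 1) p hlo (by rwa [Nat.sub_add_cancel hn])
  rwa [Nat.sub_add_cancel hn] at this

lemma blockOf_eq_and_offset_eq (h : IsBlockSubstitution k S len S') (hp : 1 ≤ p) (hq : 1 ≤ q)
    (he : S' p = S' q) :
    S (blockOf len p) = S (blockOf len q) ∧ offset len p = offset len q := by
  rw [h.apply_eq_blockOf hp, h.apply_eq_blockOf hq, Prod.mk.injEq] at he
  obtain ⟨hS, ho⟩ := he
  have := h.isBlockEnds.one_le_offset hp
  have := h.isBlockEnds.one_le_offset hq
  rw [hS] at ho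
  refine ⟨hS, ?_⟩
  split_ifs at ho <;> omega

lemma add_two_le_blockOf (h : IsBlockSubstitution k S len S') (hsf : SeqSquareFree S)
    (hp : 1 ≤ p) (hpq : p < q) (he : S' p = S' q) :
    blockOf len p + 2 ≤ blockOf len q := by
  obtain ⟨hS, ho⟩ := h.blockOf_eq_and_offset_eq hp (by omega) he
  have hp' := h.isBlockEnds.offset_add hp
  have hq' := h.isBlockEnds.offset_add (p := q) (by omega)
  obtain ⟨hn, -⟩ := h.isBlockEnds.blockOf_spec hp
  have hlt : blockOf len p < blockOf len q := by
    have : len (blockOf len p - 1) < len (blockOf len q - 1) := by omega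
    have := h.isBlockEnds.strictMono.lt_iff_lt.mp this
    omega
  by_contra hcon
  rw [show blockOf len q = blockOf len p + 1 by omega] at hS
  exact hsf.apply_ne_apply_succ hn hS

/-- Two blocks of width `k` between equal labels would spell `aba` or `bab`. -/
lemma add_le_of_apply_eq (h : IsBlockSubstitution k S len S') (hsf : SeqSquareFree S)
    (hxyx : ∀ x, 1 ≤ x → S x ≠ 2 → S (x + 1) ≠ 2 → S (x + 2) ≠ S x)
    (hp : 1 ≤ p) (hpq : p < q) (he : S' p = S' q) : p + (2 * k + 1) ≤ q := by
  have hgap := h.add_two_le_blockOf hsf hp hpq he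
  obtain ⟨hS, ho⟩ := h.blockOf_eq_and_offset_eq hp (by omega) he
  have hp' := h.isBlockEnds.offset_add hp
  have hq' := h.isBlockEnds.offset_add (p := q) (by omega)
  obtain ⟨hn, -⟩ := h.isBlockEnds.blockOf_spec hp
  obtain ⟨m, hm⟩ : ∃ m, blockOf len p = m + 1 := ⟨_, (Nat.sub_add_cancel hn).symm⟩
  rw [hm, Nat.add_sub_cancel] at hp'
  rw [hm] at hS hgap
  have h1 := h.len_succ m
  have h2 := h.len_succ (m + 1)
  have hk := h.one_le
  rcases Nat.lt_or_ge (m + 3) (blockOf len q) with hfar | hnear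
  · have h3 := h.isBlockEnds.add_le (m + 1 + 1)
    have := h.isBlockEnds.strictMono.monotone (show m + 1 + 1 + 1 ≤ blockOf len q - 1 by omega)
    split_ifs at h1 h2 <;> omega
  · rw [show blockOf len q = m + 1 + 2 by omega] at hS hq'
    rw [show m + 1 + 2 - 1 = m + 1 + 1 by omega] at hq'
    by_cases hab : S (m + 1) ≠ 2 ∧ S (m + 1 + 1) ≠ 2
    · exact absurd hS.symm (hxyx (m + 1) (by omega) hab.1 hab.2)
    · split_ifs at h1 h2 <;> omega

/-- Equal offsets at most `k` apart force the block of `p` to have width `k`. -/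
lemma apply_blockOf_ne_two (h : IsBlockSubstitution k S len S') (hp : 1 ≤ p) (hpq : p < q)
    (hqk : q ≤ p + k) (ho : offset len p = offset len q) : S (blockOf len p) ≠ 2 := by
  have hb := h.isBlockEnds.blockOf_of_lt_of_le_add hp hpq hqk
  rw [if_neg ho.not_lt] at hb
  have hp' := h.isBlockEnds.offset_add hp
  have hq' := h.isBlockEnds.offset_add (p := q) (by omega)
  rw [hb, Nat.add_sub_cancel] at hq'
  have hw := h.len_blockOf hp
  intro h2
  rw [if_pos h2] at hw
  omega

end IsBlockSubstitution

/-- A `k`-bad index sequence without the two conditions at the turn that reversal does not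
preserve (`1 < t`, and the gap `i (t + 1) < i t + k`). -/
structure IsValleyRepetition {α : Type*} (k : ℕ) (S' : ℕ → α) (r t : ℕ) (i : ℕ → ℕ) :
    Prop where
  turn_pos : 1 ≤ t
  turn_le : t ≤ 2 * r
  dec : ∀ j, 1 ≤ j → j < t → i (j + 1) < i j
  inc : ∀ j, t ≤ j → j < 2 * r → i j < i (j + 1)
  step : ∀ j, 1 ≤ j → j < 2 * r → i (j + 1) ≤ i j + k ∧ i j ≤ i (j + 1) + k
  label : ∀ j, 1 ≤ j → j ≤ r → S' (i j) = S' (i (j + r))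
  pos : ∀ j, 1 ≤ j → j ≤ 2 * r → 1 ≤ i j

lemma KBadIdx.isValleyRepetition {α : Type*} {k : ℕ} {S' : ℕ → α} {r m : ℕ} {i : ℕ → ℕ}
    (h : KBadIdx k S' r m i) (hpos : ∀ j, 1 ≤ j → j ≤ 2 * r → 1 ≤ i j) :
    IsValleyRepetition k S' r m i := by
  obtain ⟨-, hm, hmr, hlabel, hdec, hinc, hstep, -⟩ := h
  exact ⟨hm.le, hmr, hdec, hinc, hstep, hlabel, hpos⟩

namespace IsValleyRepetition

variable {α : Type*} {k : ℕ} {S' : ℕ → α} {r t : ℕ} {i : ℕ → ℕ}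

lemma reverse (h : IsValleyRepetition k S' r t i) :
    IsValleyRepetition k S' r (2 * r + 1 - t) (fun j => i (2 * r + 1 - j)) := by
  have ht := h.turn_pos
  have htr := h.turn_le
  refine ⟨by omega, by omega, fun j h₁ h₂ => ?_, fun j h₁ h₂ => ?_, fun j h₁ h₂ => ?_,
    fun j h₁ h₂ => ?_, fun j h₁ h₂ => h.pos _ (by omega) (by omega)⟩
  · have := h.inc (2 * r - j) (by omega) (by omega)
    rwa [show 2 * r - j + 1 = 2 * r + 1 - j by omega,
      show 2 * r - j = 2 * r + 1 - (j + 1) by omega] at this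
  · have := h.dec (2 * r - j) (by omega) (by omega)
    rwa [show 2 * r - j + 1 = 2 * r + 1 - j by omega,
      show 2 * r - j = 2 * r + 1 - (j + 1) by omega] at this
  · have := h.step (2 * r - j) (by omega) (by omega)
    rw [show 2 * r - j + 1 = 2 * r + 1 - j by omega,
      show 2 * r - j = 2 * r + 1 - (j + 1) by omega] at this
    exact this.symm
  · have := h.label (r + 1 - j) (by omega) (by omega)
    rw [show r + 1 - j + r = 2 * r + 1 - j by omega,
      show r + 1 - j = 2 * r + 1 - (j + r) by omega] at this
    exact this.symm

lemma strictAntiOn (h : IsValleyRepetition k S' r t i) : StrictAntiOn i (Set.Icc 1 t) :=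
  strictAntiOn_of_add_one_lt Set.ordConnected_Icc fun j _ hj hj' => h.dec j hj.1 (by
    have := hj'.2; omega)

lemma strictMonoOn (h : IsValleyRepetition k S' r t i) : StrictMonoOn i (Set.Icc t (2 * r)) :=
  strictMonoOn_of_lt_add_one Set.ordConnected_Icc fun j _ hj hj' => h.inc j hj.1 (by
    have := hj'.2; omega)

lemma turn_le_of_lt (h : IsValleyRepetition k S' r t i) (hlt : i 1 < i (1 + r)) : t ≤ r := by
  have := h.turn_pos
  have := h.turn_le
  by_contra hrt
  exact (h.strictAntiOn ⟨le_rfl, by omega⟩ ⟨by omega, by omega⟩ (by omega : 1 < 1 + r)).not_gt hlt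

lemma exists_ne (h : IsValleyRepetition k S' r t i) : ∃ j, 1 ≤ j ∧ j ≤ r ∧ i j ≠ i (j + r) := by
  have ht := h.turn_pos
  have htr := h.turn_le
  by_cases hrt : t ≤ r
  · exact ⟨t, ht, hrt,
      (h.strictMonoOn ⟨le_rfl, by omega⟩ ⟨by omega, by omega⟩ (by omega : t < t + r)).ne⟩
  · exact ⟨1, le_rfl, by omega,
      (h.strictAntiOn ⟨le_rfl, by omega⟩ ⟨by omega, by omega⟩ (by omega : 1 < 1 + r)).ne'⟩

/-- Both walks `i j` and `i (j + r)` move by at most `k`, so a gap of more than `2k` between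
them cannot change sign, nor open up from `0`. -/
lemma forall_lt_or_forall_gt (h : IsValleyRepetition k S' r t i)
    (hsep : ∀ p q, 1 ≤ p → p < q → S' p = S' q → p + (2 * k + 1) ≤ q) :
    (∀ j, 1 ≤ j → j ≤ r → i j < i (j + r)) ∨ (∀ j, 1 ≤ j → j ≤ r → i (j + r) < i j) := by
  have hsep' : ∀ j, 1 ≤ j → j ≤ r →
      (i j < i (j + r) → i j + (2 * k + 1) ≤ i (j + r)) ∧
      (i (j + r) < i j → i (j + r) + (2 * k + 1) ≤ i j) := fun j h₁ h₂ =>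
    ⟨fun hlt => hsep _ _ (h.pos j h₁ (by omega)) hlt (h.label j h₁ h₂),
      fun hgt => hsep _ _ (h.pos (j + r) (by omega) (by omega)) hgt (h.label j h₁ h₂).symm⟩
  have hstep : ∀ j, 1 ≤ j → j < r →
      (i (j + 1) ≤ i j + k ∧ i j ≤ i (j + 1) + k) ∧
      (i (j + 1 + r) ≤ i (j + r) + k ∧ i (j + r) ≤ i (j + 1 + r) + k) := fun j h₁ h₂ =>
    ⟨h.step j h₁ (by omega), Nat.add_right_comm j 1 r ▸ h.step (j + r) (by omega) (by omega)⟩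
  have hlt := iff_one_of_iff_succ (P := fun j => i j < i (j + r)) fun j h₁ h₂ => by
    have := hsep' j h₁ h₂.le; have := hsep' (j + 1) (by omega) h₂; have := hstep j h₁ h₂; omega
  have hgt := iff_one_of_iff_succ (P := fun j => i (j + r) < i j) fun j h₁ h₂ => by
    have := hsep' j h₁ h₂.le; have := hsep' (j + 1) (by omega) h₂; have := hstep j h₁ h₂; omega
  obtain ⟨j₀, h₁, h₂, hne⟩ := h.exists_ne
  rcases Nat.lt_or_gt_of_ne hne with hj₀ | hj₀
  · exact Or.inl fun j hj₁ hj₂ => (hlt j hj₁ hj₂).mpr ((hlt j₀ h₁ h₂).mp hj₀)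
  · exact Or.inr fun j hj₁ hj₂ => (hgt j hj₁ hj₂).mpr ((hgt j₀ h₁ h₂).mp hj₀)

end IsValleyRepetition

/-- The blocks `b j` and offsets `o j` of the positions of an `IsValleyRepetition` whose second
half lies above its first half. -/
structure BlockValley (S : ℕ → Fin 3) (r t : ℕ) (b o : ℕ → ℕ) : Prop where
  turn_pos : 1 ≤ t
  turn_le : t ≤ r
  pos : ∀ j, 1 ≤ j → j ≤ 2 * r → 1 ≤ b j
  label : ∀ j, 1 ≤ j → j ≤ r → S (b j) = S (b (j + r))
  offset : ∀ j, 1 ≤ j → j ≤ r → o j = o (j + r)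
  gap : ∀ j, 1 ≤ j → j ≤ r → b j + 2 ≤ b (j + r)
  down : ∀ j, 1 ≤ j → j < t → b j = if o (j + 1) < o j then b (j + 1) else b (j + 1) + 1
  up : ∀ j, t ≤ j → j < 2 * r → b (j + 1) = if o j < o (j + 1) then b j else b j + 1
  down_narrow : ∀ j, 1 ≤ j → j < t → o j = o (j + 1) → S (b (j + 1)) ≠ 2
  up_narrow : ∀ j, t ≤ j → j < 2 * r → o j = o (j + 1) → S (b j) ≠ 2

namespace BlockValley

variable {S : ℕ → Fin 3} {r t : ℕ} {b o : ℕ → ℕ} {j Q : ℕ}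

lemma up_le_add_one (h : BlockValley S r t b o) (h₁ : t ≤ j) (h₂ : j < 2 * r) :
    b (j + 1) ≤ b j + 1 := by
  rw [h.up j h₁ h₂]; split_ifs <;> omega

lemma shift_succ_of_up (h : BlockValley S r t b o) (h₁ : t ≤ j) (h₂ : j < r) :
    b (j + 1 + r) + b j = b (j + r) + b (j + 1) := by
  have hlo := h.up j h₁ (by omega)
  have hhi := h.up (j + r) (by have := h.turn_le; omega) (by omega)
  rw [h.offset j (by have := h.turn_pos; omega) h₂.le,
    h.offset (j + 1) (by omega) h₂, Nat.add_right_comm] at hlo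
  rw [Nat.add_right_comm, hlo, hhi]
  split_ifs <;> omega

lemma shift_succ_of_down (h : BlockValley S r t b o) (h₁ : 1 ≤ j) (h₂ : j < t) :
    b (j + r) + b (j + 1) + 1 ≤ b (j + 1 + r) + b j := by
  have hlo := h.down j h₁ h₂
  have hhi := h.up (j + r) (by have := h.turn_le; omega) (by have := h.turn_le; omega)
  rw [← h.offset j h₁ (by have := h.turn_le; omega),
    ← Nat.add_right_comm, ← h.offset (j + 1) (by omega) (by have := h.turn_le; omega)] at hhi
  rw [Nat.add_right_comm, hlo, hhi]
  split_ifs <;> omega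

lemma shift_eq (h : BlockValley S r t b o) (h₁ : t ≤ j) (h₂ : j ≤ r) :
    b (j + r) + b t = b (t + r) + b j := by
  induction j, h₁ using Nat.le_induction with
  | base => rfl
  | succ j hj ih =>
    have := h.shift_succ_of_up hj h₂
    have := ih (by omega)
    omega

lemma shift_ge (h : BlockValley S r t b o) : b t + t + 1 ≤ b (t + r) := by
  suffices ∀ j, 1 ≤ j → j ≤ t → b j + j + 1 ≤ b (j + r) from this t h.turn_pos le_rfl
  intro j h₁
  induction j, h₁ using Nat.le_induction with
  | base => intro _; have := h.gap 1 le_rfl (by have := h.turn_le; omega); omega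
  | succ j hj ih =>
    intro h₂
    have := h.shift_succ_of_down hj h₂
    have := ih (by omega)
    omega

lemma climb_le (h : BlockValley S r t b o) : b (t + r) ≤ b r + t := by
  suffices ∀ a, a ≤ t → b (r + a) ≤ b r + a by simpa [Nat.add_comm] using this t le_rfl
  intro a ha
  induction a with
  | zero => rfl
  | succ a ih =>
    have := h.up_le_add_one (j := r + a) (by have := h.turn_le; omega)
      (by have := h.turn_le; omega)
    have := ih (by omega)
    rw [← Nat.add_assoc]
    omega

/-- The rising arm visits every block between `b t` and `b r`, and along it the block shift
stays `Q`. -/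
lemma apply_add_shift (h : BlockValley S r t b o) (hQ : b (t + r) = b t + Q) {x : ℕ}
    (hx₁ : b t ≤ x) (hx₂ : x ≤ b r) : S x = S (x + Q) := by
  obtain ⟨j, hj₁, hj₂, rfl⟩ := exists_eq_of_le_add_one_s17 h.turn_le
    (fun j h₁ h₂ => h.up_le_add_one h₁ (by omega)) hx₁ hx₂
  have := h.shift_eq hj₁ hj₂
  rw [h.label j (by have := h.turn_pos; omega) hj₂]
  congr 1
  omega

lemma false_of_turn_eq_one (h : BlockValley S r t b o) (hsf : SeqSquareFree S) (ht : t = 1) :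
    False := by
  subst ht
  have := h.turn_le
  have hgap := h.gap 1 le_rfl h.turn_le
  have hclimb := h.climb_le
  refine hsf ⟨b 1, b (1 + r) - b 1, h.pos 1 le_rfl (by omega), by omega, fun u hu => ?_⟩
  rw [h.apply_add_shift (Q := b (1 + r) - b 1) (by omega) (by omega) (by omega)]
  congr 1
  omega

lemma false_of_two_le_turn (h : BlockValley S r t b o) (hsf : SeqSquareFree S)
    (hxyx : ∀ x, 1 ≤ x → S x ≠ 2 → S (x + 1) ≠ 2 → S (x + 2) ≠ S x) (ht : 2 ≤ t) : False := by
  obtain ⟨s, rfl⟩ : ∃ s, t = s + 1 := ⟨t - 1, by omega⟩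
  have htr := h.turn_le
  have hd := h.down s (by omega) (by omega)
  have hu := h.up (s + r) (by omega) (by omega)
  have hnd := h.down_narrow s (by omega) (by omega)
  have hnu := h.up_narrow (s + r) (by omega) (by omega)
  rw [← h.offset s (by omega) (by omega), Nat.add_right_comm,
    ← h.offset (s + 1) (by omega) (by omega)] at hu hnu
  have hLs := h.label s (by omega) (by omega)
  have hLt := h.label (s + 1) (by omega) (by omega)
  have hx := h.pos (s + r) (by omega) (by omega)
  rcases lt_trichotomy (o s) (o (s + 1)) with hlt | heq | hgt
  · rw [if_neg (by omega)] at hd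
    rw [if_pos hlt] at hu
    exact hsf.apply_ne_apply_succ (h.pos (s + 1) (by omega) (by omega))
      (by rw [hLt, hu, ← hLs, hd])
  · rw [if_neg (by omega)] at hd
    rw [if_neg (by omega)] at hu
    have hshift := h.shift_ge
    have hclimb := h.climb_le
    have hper := h.apply_add_shift (Q := b (s + 1 + r) - b (s + 1)) (by omega)
      (x := b (s + 1) + 1) (by omega) (by omega)
    refine hxyx (b (s + r)) hx (hnu heq) (by rw [← hu, ← hLt]; exact hnd heq) ?_
    rw [← hLs, hd, hper]
    congr 1
    omega
  · rw [if_pos hgt] at hd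
    rw [if_neg (by omega)] at hu
    exact hsf.apply_ne_apply_succ hx
      (by rw [← hLs, hd, hLt, hu])

lemma false (h : BlockValley S r t b o) (hsf : SeqSquareFree S)
    (hxyx : ∀ x, 1 ≤ x → S x ≠ 2 → S (x + 1) ≠ 2 → S (x + 2) ≠ S x) : False := by
  rcases Nat.lt_or_ge t 2 with ht | ht
  · exact h.false_of_turn_eq_one hsf (by have := h.turn_pos; omega)
  · exact h.false_of_two_le_turn hsf hxyx ht

end BlockValley

namespace IsValleyRepetition

variable {k : ℕ} {r t : ℕ} {i : ℕ → ℕ} {S : ℕ → Fin 3} {len : ℕ → ℕ} {S' : ℕ → Fin 3 × ℕ}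

lemma blockValley (h : IsValleyRepetition k S' r t i) (hsub : IsBlockSubstitution k S len S')
    (hsf : SeqSquareFree S) (hlt : ∀ j, 1 ≤ j → j ≤ r → i j < i (j + r)) :
    BlockValley S r t (fun j => blockOf len (i j)) (fun j => offset len (i j)) := by
  have htr := h.turn_le_of_lt (hlt 1 le_rfl (by have := h.turn_pos; have := h.turn_le; omega))
  have ht := h.turn_pos
  have hL := hsub.isBlockEnds
  have hpair := fun j (h₁ : 1 ≤ j) (h₂ : j ≤ r) => hsub.blockOf_eq_and_offset_eq
    (h.pos j h₁ (by omega)) (h.pos (j + r) (by omega) (by omega)) (h.label j h₁ h₂)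
  refine ⟨ht, htr, fun j h₁ h₂ => (hL.blockOf_spec (h.pos j h₁ h₂)).1,
    fun j h₁ h₂ => (hpair j h₁ h₂).1, fun j h₁ h₂ => (hpair j h₁ h₂).2, fun j h₁ h₂ => ?_,
    fun j h₁ h₂ => ?_, fun j h₁ h₂ => ?_, fun j h₁ h₂ ho => ?_, fun j h₁ h₂ ho => ?_⟩
  · exact hsub.add_two_le_blockOf hsf (h.pos j h₁ (by omega)) (hlt j h₁ h₂) (h.label j h₁ h₂)
  · exact hL.blockOf_of_lt_of_le_add (h.pos (j + 1) (by omega) (by omega)) (h.dec j h₁ h₂)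
      (h.step j h₁ (by omega)).2
  · exact hL.blockOf_of_lt_of_le_add (h.pos j (by omega) (by omega)) (h.inc j h₁ h₂)
      (h.step j (by omega) h₂).1
  · exact hsub.apply_blockOf_ne_two (h.pos (j + 1) (by omega) (by omega)) (h.dec j h₁ h₂)
      (h.step j h₁ (by omega)).2 ho.symm
  · exact hsub.apply_blockOf_ne_two (h.pos j (by omega) (by omega)) (h.inc j h₁ h₂)
      (h.step j (by omega) h₂).1 ho

end IsValleyRepetition

/-- Let `S` be an infinite square-free sequence over `{a, b, c}` (encoded as `0, 1, 2`)
containing neither `aba` nor `bab`. Form `S'` by replacing each occurrence of `c` by the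
block `c⁽⁰⁾, …, c⁽ᵏ⁾` (`k + 1` symbols) and each occurrence of `a` (resp. `b`) by
`a⁽¹⁾, …, a⁽ᵏ⁾` (resp. `b⁽¹⁾, …, b⁽ᵏ⁾`); here `len m` is the total length of the first `m`
blocks. Then `S'` is a `k`-special sequence (over `3k + 1` symbols). -/
theorem stmt17 (k : ℕ) (hk : 1 ≤ k) (S : ℕ → Fin 3)
    (hsf : SeqSquareFree S)
    (haba : ∀ p, 1 ≤ p → ¬ (S p = 0 ∧ S (p + 1) = 1 ∧ S (p + 2) = 0))
    (hbab : ∀ p, 1 ≤ p → ¬ (S p = 1 ∧ S (p + 1) = 0 ∧ S (p + 2) = 1))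
    (S' : ℕ → Fin 3 × ℕ) (len : ℕ → ℕ)
    (hlen0 : len 0 = 0)
    (hlen : ∀ m, len (m + 1) = len m + (if S (m + 1) = 2 then k + 1 else k))
    (hS' : ∀ m p, len m < p → p ≤ len (m + 1) →
      S' p = (S (m + 1), if S (m + 1) = 2 then p - len m - 1 else p - len m)) :
    KSpecialInf k S' := by
  have hsub : IsBlockSubstitution k S len S' := ⟨hk, hlen0, hlen, hS'⟩
  have hxyx := fun x => hsf.apply_add_two_ne haba hbab (x := x)
  rintro ⟨r, m, i, hbad, hpos⟩
  have h := hbad.isValleyRepetition hpos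
  rcases h.forall_lt_or_forall_gt fun _ _ => hsub.add_le_of_apply_eq hsf hxyx with hlt | hgt
  · exact (h.blockValley hsub hsf hlt).false hsf hxyx
  · refine (h.reverse.blockValley hsub hsf fun j h₁ h₂ => ?_).false hsf hxyx
    have := hgt (r + 1 - j) (by omega) (by omega)
    rwa [show r + 1 - j + r = 2 * r + 1 - j by omega,
      show r + 1 - j = 2 * r + 1 - (j + r) by omega] at this
end
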